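/- arXiv:1407.3746 — 10 statements merged into one kernel-verified Lean document; each statement's English description precedes it below -/
import Mathlib

section
/- Let L be a field extension of k and let A ∈ GL(n, L). If A commutes with ι(X) for every X ∈ SO(n,k,β) (equivalently, the conjugation map Inn_A(X) = A⁻¹XA is the identity on the image of SO(n,k,β) in GL(n,L)), then A is a diagonal matrix. -/
open Matrix
/-- If `Inn_A` is the identity on `SO(n,k,β)` (i.e. `A` commutes with the image of every
element of `SO(n,k,β)` in `GL(n,L)`), then `A` is diagonal. -/
theorem so_inner_identity_diagonal {k L : Type*} [Field k] [Field L] [Algebra k L]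
    (hchar : (2 : k) ≠ 0) {n : ℕ} (hn : 2 < n)
    (M : Matrix (Fin n) (Fin n) k) (hMdiag : M.IsDiag) (hM : IsUnit M)
    (A : Matrix (Fin n) (Fin n) L) (hA : IsUnit A)
    (hcomm : ∀ X : Matrix (Fin n) (Fin n) k, Xᵀ * M * X = M → X.det = 1 →
      A * X.map (algebraMap k L) = X.map (algebraMap k L) * A) :
    A.IsDiag := by
  intro i j hij
  -- pick l distinct from i and j
  have hcard : ({i, j} : Finset (Fin n)).card < Fintype.card (Fin n) := by
    have h2 : ({i, j} : Finset (Fin n)).card ≤ 2 :=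
      (Finset.card_insert_le _ _).trans (by simp)
    simpa using lt_of_le_of_lt h2 hn
  have hpos : 0 < (({i, j} : Finset (Fin n))ᶜ).card := by
    rw [Finset.card_compl]; omega
  obtain ⟨l, hl⟩ := Finset.card_pos.mp hpos
  simp only [Finset.mem_compl, Finset.mem_insert, Finset.mem_singleton, not_or] at hl
  obtain ⟨hli, hlj⟩ := hl
  set d : Fin n → k := fun m => if m = i ∨ m = l then -1 else 1 with hd
  have hdsq : ∀ m, d m * d m = 1 := by
    intro m; by_cases h : m = i ∨ m = l <;> simp [hd, h]
  have hX : (diagonal d)ᵀ * M * diagonal d = M := by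
    rw [diagonal_transpose]
    ext a b
    rw [mul_diagonal, diagonal_mul]
    by_cases hab : a = b
    · subst hab
      rw [mul_comm (d a), mul_assoc, hdsq, mul_one]
    · rw [hMdiag hab, mul_zero, zero_mul]
  have hdet : (diagonal d).det = 1 := by
    rw [det_diagonal]
    rw [Fintype.prod_eq_mul i l (Ne.symm hli) (fun m hm => by simp [hd, hm.1, hm.2])]
    simp [hd, hli]
  have hmap : (diagonal d).map (algebraMap k L) =
      diagonal (fun m => algebraMap k L (d m)) := diagonal_map (map_zero _)
  have hc := hcomm (diagonal d) hX hdet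
  rw [hmap] at hc
  have hcij := congrFun (congrFun hc i) j
  rw [mul_diagonal, diagonal_mul] at hcij
  have hdj : d j = 1 := by simp [hd, Ne.symm hij, Ne.symm hlj]
  have hdi : d i = -1 := by simp [hd]
  rw [hdj, hdi, _root_.map_one, mul_one, map_neg, _root_.map_one, neg_mul, one_mul] at hcij
  have h2 : (2 : L) ≠ 0 := by
    have := (algebraMap k L).injective.ne hchar
    simpa [map_ofNat] using this
  have : (2 : L) * A i j = 0 := by linear_combination hcij
  exact (mul_eq_zero.mp this).resolve_left h2
end

section
/- Assume SO(n,k,β) is friendly. Let L be a field extension of k and let A ∈ GL(n, L). Then A commutes with ι(X) for every X ∈ SO(n,k,β) if and only if A = c·I_n for some nonzero scalar c ∈ L. -/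
/-!
For diagonal `M` the sign changes `diag(±1)` with an even number of `-1`s lie in `SO(M)`; since
`n ≥ 3`, for `i ≠ j` one of them flips the sign of coordinate `i` but not of `j`, and commuting
with it forces `A i j = -A i j = 0`. A diagonal `A` commuting with some `X ∈ SO(M)` with
`X t s ≠ 0` has `A s s = A t t`. Such an `X` is the product of the reflections in `e_s` and in an
anisotropic vector `w` with `w s, w t ≠ 0`, and friendliness of the pair `(s, t)` provides `w`.
-/

open Matrix

namespace Matrix

section Reflection

variable {n K : Type*} [Fintype n] [DecidableEq n] [Field K]

/-- The reflection `x ↦ x - (2 β(v, x) / β(v, v)) • v` for the form `β(x, y) = xᵀ M y`. -/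
def reflection (M : Matrix n n K) (v : n → K) : Matrix n n K :=
  1 - (2 / (v ⬝ᵥ (M *ᵥ v))) • vecMulVec v (v ᵥ* M)

lemma reflection_transpose_mul_mul_self {M : Matrix n n K} (hM : Mᵀ = M) {v : n → K}
    (hv : v ⬝ᵥ (M *ᵥ v) ≠ 0) :
    (reflection M v)ᵀ * M * reflection M v = M := by
  have hMv : M *ᵥ v = v ᵥ* M := by rw [← vecMul_transpose, hM]
  have hc : 2 / (v ⬝ᵥ (M *ᵥ v)) * (v ⬝ᵥ (v ᵥ* M)) = 2 := by
    rw [← hMv, div_mul_cancel₀ _ hv]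
  unfold reflection
  generalize 2 / (v ⬝ᵥ (M *ᵥ v)) = c at hc ⊢
  rw [Matrix.mul_assoc, Matrix.mul_sub, Matrix.mul_one, Matrix.mul_smul, mul_vecMulVec, hMv,
    transpose_sub, transpose_one, transpose_smul, transpose_vecMulVec, Matrix.sub_mul,
    Matrix.one_mul, Matrix.smul_mul, Matrix.mul_sub, Matrix.mul_smul, vecMulVec_mul,
    vecMulVec_mul_vecMulVec, vecMulVec_smul, smul_smul]
  linear_combination (norm := module) c • hc • vecMulVec (v ᵥ* M) (v ᵥ* M)

lemma det_reflection (M : Matrix n n K) {v : n → K} (hv : v ⬝ᵥ (M *ᵥ v) ≠ 0) :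
    (reflection M v).det = -1 := by
  rw [reflection, vecMulVec_eq Unit, ← smul_mul, det_one_sub_mul_comm, det_unique,
    Matrix.sub_apply, one_apply_eq, Matrix.mul_smul, Matrix.smul_apply,
    replicateRow_mul_replicateCol_apply, ← dotProduct_mulVec, smul_eq_mul, div_mul_cancel₀ _ hv]
  norm_num

lemma reflection_apply_of_ne (M : Matrix n n K) (v : n → K) {i j : n} (hij : i ≠ j) :
    reflection M v i j = -(2 / (v ⬝ᵥ (M *ᵥ v))) * (v i * (v ᵥ* M) j) := by
  simp [reflection, one_apply_ne hij, vecMulVec_apply]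

end Reflection

section SignFlip

variable {n R : Type*} [DecidableEq n] [CommRing R]

def signFlip (a : n) : n → R := fun i => if i = a then -1 else 1

lemma diagonal_signFlip_transpose_mul_mul_self [Fintype n] (a : n) (d : n → R) :
    (diagonal (signFlip a))ᵀ * diagonal d * diagonal (signFlip a) = diagonal d := by
  rw [diagonal_transpose, diagonal_mul_diagonal, diagonal_mul_diagonal]
  congr 1
  ext i
  by_cases h : i = a <;> simp [signFlip, h]

lemma det_diagonal_signFlip [Fintype n] (a : n) : (diagonal (signFlip a : n → R)).det = -1 := by
  simp [det_diagonal, signFlip]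

lemma diagonal_signFlip_map {S : Type*} [CommRing S] (f : R →+* S) (a : n) :
    (diagonal (signFlip a : n → R)).map f = diagonal (signFlip a) := by
  rw [diagonal_map (map_zero f)]
  congr 1
  ext i
  simp [signFlip, apply_ite f]

lemma isDiag_of_commute_diagonal_signFlip {m : ℕ} (hm : 2 < m) {L : Type*} [Field L]
    (h2 : (2 : L) ≠ 0) {A : Matrix (Fin m) (Fin m) L}
    (hA : ∀ i r, Commute A (diagonal (signFlip i) * diagonal (signFlip r))) :
    A.IsDiag := by
  intro i j hij
  obtain ⟨r, hri, hrj⟩ := Fin.exists_ne_and_ne_of_two_lt i j hm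
  have h := congrFun (congrFun (hA i r).eq i) j
  simp only [diagonal_mul_diagonal, mul_diagonal, diagonal_mul, signFlip, hij.symm, hri.symm,
    hrj.symm, if_true, if_false, mul_one, one_mul, neg_mul] at h
  exact (mul_eq_zero.1 (by linear_combination h : (2 : L) * A i j = 0)).resolve_left h2

end SignFlip

lemma transpose_mul_mul_self_mul_and_det_mul_eq_one {n R : Type*} [Fintype n] [DecidableEq n]
    [CommRing R] {M X Y : Matrix n n R} (hX : Xᵀ * M * X = M) (hY : Yᵀ * M * Y = M)
    (hXdet : X.det = -1) (hYdet : Y.det = -1) :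
    (X * Y)ᵀ * M * (X * Y) = M ∧ (X * Y).det = 1 := by
  refine ⟨?_, by rw [det_mul, hXdet, hYdet]; norm_num⟩
  rw [transpose_mul, show Yᵀ * Xᵀ * M * (X * Y) = Yᵀ * (Xᵀ * M * X) * Y by
    simp only [Matrix.mul_assoc], hX, hY]

lemma diagonal_eq_of_commute {n L : Type*} [Fintype n] [DecidableEq n] [Field L]
    {a : n → L} {X : Matrix n n L} (h : Commute (diagonal a) X) {s t : n} (hX : X t s ≠ 0) :
    a s = a t := by
  have h := congrFun (congrFun h.eq t) s
  rw [diagonal_mul, mul_diagonal, mul_comm] at h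
  exact (mul_left_cancel₀ hX h).symm

lemma IsDiag.apply_self_ne_zero {n K : Type*} [Fintype n] [DecidableEq n] [Field K]
    {M : Matrix n n K} (hM : M.IsDiag) (hunit : IsUnit M) (i : n) :
    M i i ≠ 0 := by
  rw [← hM.diagonal_diag, isUnit_diagonal] at hunit
  exact (Pi.isUnit_iff.1 hunit i).ne_zero

lemma IsDiag.exists_ne_zero_eq_smul_one {n L : Type*} [Fintype n] [DecidableEq n] [Nonempty n]
    [Field L] {A : Matrix n n L} (hA : A.IsDiag) (hconst : ∀ s t, A s s = A t t)
    (hunit : IsUnit A) :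
    ∃ c : L, c ≠ 0 ∧ A = c • (1 : Matrix n n L) := by
  obtain ⟨i₀⟩ := ‹Nonempty n›
  have hAc : A = A i₀ i₀ • (1 : Matrix n n L) := by
    rw [smul_one_eq_diagonal]
    conv_lhs => rw [← hA.diagonal_diag]
    exact congrArg diagonal (funext fun i => hconst i i₀)
  refine ⟨A i₀ i₀, fun h0 => ?_, hAc⟩
  rw [hAc, h0, zero_smul] at hunit
  exact not_isUnit_zero hunit

section DiagonalForm

variable {n k : Type*} [Fintype n] [DecidableEq n] [Field k]

lemma exists_anisotropic_of_sq_add_div_mul_sq_eq_one (h2 : (2 : k) ≠ 0) {d : n → k} {s t : n}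
    (hst : s ≠ t) (hs : d s ≠ 0) (ht : d t ≠ 0) {x y : k} (hy : y ≠ 0)
    (hxy : x ^ 2 + (d s / d t) * y ^ 2 = 1) :
    ∃ w : n → k, w s ≠ 0 ∧ w t ≠ 0 ∧ w ⬝ᵥ (diagonal d *ᵥ w) ≠ 0 := by
  have hxy' : d s * y ^ 2 = d t * (1 - x ^ 2) := by
    field_simp at hxy
    linear_combination hxy
  have hx : 1 - x ≠ 0 := by
    intro hx
    obtain rfl : x = 1 := by linear_combination -hx
    simp_all
  refine ⟨Pi.single s y + Pi.single t (1 - x), by simp [hst, hy], by simp [hst.symm, hx], ?_⟩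
  have hQ : (Pi.single s y + Pi.single t (1 - x)) ⬝ᵥ
      (diagonal d *ᵥ (Pi.single s y + Pi.single t (1 - x))) = 2 * d t * (1 - x) := by
    simp [mulVec_diagonal, hst, hst.symm]
    linear_combination hxy'
  rw [hQ]
  exact mul_ne_zero (mul_ne_zero h2 ht) hx

lemma exists_det_eq_one_apply_ne_zero (h2 : (2 : k) ≠ 0) {d : n → k} {s t : n}
    (hst : s ≠ t) (hs : d s ≠ 0) (ht : d t ≠ 0)
    (hfriendly : ∃ x y : k, y ≠ 0 ∧ x ^ 2 + (d s / d t) * y ^ 2 = 1) :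
    ∃ X : Matrix n n k, Xᵀ * diagonal d * X = diagonal d ∧ X.det = 1 ∧ X t s ≠ 0 := by
  obtain ⟨x, y, hy, hxy⟩ := hfriendly
  obtain ⟨w, hws, hwt, hw⟩ := exists_anisotropic_of_sq_add_div_mul_sq_eq_one h2 hst hs ht hy hxy
  obtain ⟨hX, hXdet⟩ := transpose_mul_mul_self_mul_and_det_mul_eq_one
    (diagonal_signFlip_transpose_mul_mul_self s d)
    (reflection_transpose_mul_mul_self (diagonal_transpose d) hw) (det_diagonal_signFlip s)
    (det_reflection _ hw)
  refine ⟨_, hX, hXdet, ?_⟩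
  rw [diagonal_mul, reflection_apply_of_ne _ _ hst.symm, vecMul_diagonal]
  simp [signFlip, hst.symm, h2, hw, hwt, hws, hs]

end DiagonalForm

end Matrix

/-- For a friendly orthogonal group, `Inn_A` is the identity on `SO(n,k,β)` if and only if
`A` is a nonzero scalar multiple of the identity. -/
theorem so_inner_identity_iff_scalar {k L : Type*} [Field k] [Field L] [Algebra k L]
    (hchar : (2 : k) ≠ 0) {n : ℕ} (hn : 2 < n)
    (M : Matrix (Fin n) (Fin n) k) (hMdiag : M.IsDiag) (hM : IsUnit M)
    (hfriendly : ∀ s t : Fin n, ∃ x y : k, y ≠ 0 ∧ x ^ 2 + (M s s / M t t) * y ^ 2 = 1)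
    (A : Matrix (Fin n) (Fin n) L) (hA : IsUnit A) :
    (∀ X : Matrix (Fin n) (Fin n) k, Xᵀ * M * X = M → X.det = 1 →
      A * X.map (algebraMap k L) = X.map (algebraMap k L) * A) ↔
    (∃ c : L, c ≠ 0 ∧ A = c • (1 : Matrix (Fin n) (Fin n) L)) := by
  refine ⟨fun hcomm => ?_, ?_⟩
  · have hMd : diagonal M.diag = M := hMdiag.diagonal_diag
    have h2 : (2 : L) ≠ 0 := by
      rw [← map_ofNat (algebraMap k L) 2]
      exact (map_ne_zero _).2 hchar
    have hAdiag : A.IsDiag := by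
      refine isDiag_of_commute_diagonal_signFlip hn h2 fun i r => ?_
      obtain ⟨hX, hXdet⟩ := transpose_mul_mul_self_mul_and_det_mul_eq_one
        (hMd ▸ diagonal_signFlip_transpose_mul_mul_self i M.diag)
        (hMd ▸ diagonal_signFlip_transpose_mul_mul_self r M.diag)
        (det_diagonal_signFlip i) (det_diagonal_signFlip r)
      simpa only [Commute, SemiconjBy, Matrix.map_mul, diagonal_signFlip_map] using hcomm _ hX hXdet
    have hAconst : ∀ s t, A s s = A t t := by
      intro s t
      rcases eq_or_ne s t with rfl | hst
      · rfl
      obtain ⟨X, hX, hXdet, hXts⟩ :=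
        exists_det_eq_one_apply_ne_zero (d := M.diag) hchar hst (hMdiag.apply_self_ne_zero hM s)
          (hMdiag.apply_self_ne_zero hM t) (hfriendly s t)
      have hcomm' := hcomm X (hMd ▸ hX) hXdet
      rw [← hAdiag.diagonal_diag] at hcomm'
      exact diagonal_eq_of_commute hcomm' ((map_ne_zero (algebraMap k L)).2 hXts)
    have : Nonempty (Fin n) := ⟨⟨0, by omega⟩⟩
    exact hAdiag.exists_ne_zero_eq_smul_one hAconst hA
  · rintro ⟨c, -, rfl⟩ X - -
    rw [Matrix.smul_mul, Matrix.one_mul, Matrix.mul_smul, Matrix.mul_one]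
end

section
/- Let k be a field with char(k) ≠ 2 and let a ∈ k be nonzero. If a ≠ −1 or char(k) ≠ 3, then there exist x, y ∈ k with y ≠ 0 such that x² + a·y² = 1. In particular, if char(k) ∉ {2,3} then SO(n,k,β) is a friendly orthogonal group for every invertible diagonal matrix M, and if char(k) ≠ 2 and no two diagonal entries m_s, m_t of M with s ≠ t satisfy m_s = −m_t, then SO(n,k,β) is friendly. -/
open Matrix

lemma sol_of_t {k : Type*} [Field k] (hchar : (2:k) ≠ 0) (a t : k) (ht : t ≠ 0)
    (hd : 1 + a * t ^ 2 ≠ 0) : ∃ x y : k, y ≠ 0 ∧ x ^ 2 + a * y ^ 2 = 1 := by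
  refine ⟨(1 - a * t ^ 2) / (1 + a * t ^ 2), 2 * t / (1 + a * t ^ 2), ?_, ?_⟩
  · exact div_ne_zero (mul_ne_zero hchar ht) hd
  · field_simp
    ring

lemma key {k : Type*} [Field k] (hchar : (2:k) ≠ 0) (a : k) (ha : a ≠ 0)
    (h : a ≠ -1 ∨ (3:k) ≠ 0) : ∃ x y : k, y ≠ 0 ∧ x ^ 2 + a * y ^ 2 = 1 := by
  by_cases hm : a = -1
  · have h3 : (3:k) ≠ 0 := h.resolve_left (by simp [hm])
    refine sol_of_t hchar a 2 hchar ?_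
    rw [hm]; intro hc
    apply h3
    have : (1 : k) + -1 * 2 ^ 2 = -3 := by ring
    rw [this] at hc
    linear_combination -hc
  · refine sol_of_t hchar a 1 one_ne_zero ?_
    intro hc
    apply hm
    linear_combination hc - 1

lemma diag_ne_zero {k : Type*} [Field k] {n : ℕ} {M : Matrix (Fin n) (Fin n) k}
    (hd : M.IsDiag) (hu : IsUnit M) (s : Fin n) : M s s ≠ 0 := by
  have hdet : IsUnit M.det := (Matrix.isUnit_iff_isUnit_det M).mp hu
  have hinv : M * M⁻¹ = 1 := Matrix.mul_nonsing_inv M hdet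
  have := congrFun (congrFun hinv s) s
  rw [Matrix.mul_apply, Matrix.one_apply_eq] at this
  rw [Finset.sum_eq_single s (fun j _ hj => by rw [hd (Ne.symm hj), zero_mul])
    (fun h => absurd (Finset.mem_univ s) h)] at this
  intro h0
  rw [h0, zero_mul] at this
  exact zero_ne_one this

/-- If `a ≠ -1` or `char k ≠ 3`, the equation `x² + a y² = 1` has a solution with `y ≠ 0`.
In particular, `SO(n,k,β)` is friendly when `char k ∉ {2,3}`, and also when `char k ≠ 2` and
no two distinct diagonal entries of `M` are negatives of each other. -/
theorem friendly_criteria {k : Type*} [Field k] (hchar : (2 : k) ≠ 0) :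
    (∀ a : k, a ≠ 0 → (a ≠ -1 ∨ (3 : k) ≠ 0) →
      ∃ x y : k, y ≠ 0 ∧ x ^ 2 + a * y ^ 2 = 1) ∧
    (∀ (n : ℕ) (M : Matrix (Fin n) (Fin n) k), M.IsDiag → IsUnit M →
      (((3 : k) ≠ 0) →
        ∀ s t : Fin n, ∃ x y : k, y ≠ 0 ∧ x ^ 2 + (M s s / M t t) * y ^ 2 = 1) ∧
      ((∀ s t : Fin n, s ≠ t → M s s ≠ -(M t t)) →
        ∀ s t : Fin n, ∃ x y : k, y ≠ 0 ∧ x ^ 2 + (M s s / M t t) * y ^ 2 = 1)) := by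
  refine ⟨key hchar, fun n M hd hu => ?_⟩
  have hne : ∀ s : Fin n, M s s ≠ 0 := diag_ne_zero hd hu
  constructor
  · intro h3 s t
    exact key hchar _ (div_ne_zero (hne s) (hne t)) (Or.inr h3)
  · intro hno s t
    refine key hchar _ (div_ne_zero (hne s) (hne t)) (Or.inl ?_)
    intro hc
    by_cases hst : s = t
    · subst hst
      rw [div_self (hne s)] at hc
      apply hchar
      linear_combination hc
    · apply hno s t hst
      rw [div_eq_iff (hne t)] at hc
      linear_combination hc
end

section
/- Let L be a field extension of k, let α ∈ k be nonzero, and let s ∈ L satisfy s² = ι(α), where 1 and s are linearly independent over k. Let A₀ ∈ M_n(k) and set A = s·ι(A₀) ∈ M_n(L); assume A² = I_n. If x, y ∈ k^n satisfy A·(ι(x) + s·ι(y)) = −(ι(x) + s·ι(y)), then A·(ι(x) − s·ι(y)) = ι(x) − s·ι(y); likewise, if u, v ∈ k^n satisfy A·(ι(u) + s·ι(v)) = ι(u) + s·ι(v), then A·(ι(u) − s·ι(v)) = −(ι(u) − s·ι(v)). Moreover, the eigenspaces of A in L^n for the eigenvalues 1 and −1 have equal dimension. -/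
open Matrix

lemma det_map_isUnit {K L : Type*} [Field K] [Field L] (f : K →+* L) {n : Type*}
    [Fintype n] [DecidableEq n] {M : Matrix n n K} (h : M.det = 1) :
    IsUnit (M.map f).det := by
  have : f M.det = (M.map f).det := f.map_det M
  rw [h, _root_.map_one] at this
  rw [← this]; exact isUnit_one

/-- Rank of a square matrix is invariant under a field homomorphism. -/
lemma rank_map_field {K L : Type*} [Field K] [Field L] (f : K →+* L) {n : Type*}
    [Fintype n] [DecidableEq n] (M : Matrix n n K) : (M.map f).rank = M.rank := by
  classical
  obtain ⟨L₁, L₂, D, h⟩ := Matrix.Pivot.exists_list_transvec_mul_mul_list_transvec_eq_diagonal M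
  set P := (L₁.map Matrix.TransvectionStruct.toMatrix).prod with hP
  set Q := (L₂.map Matrix.TransvectionStruct.toMatrix).prod with hQ
  have hdP : P.det = 1 := Matrix.TransvectionStruct.det_toMatrix_prod L₁
  have hdQ : Q.det = 1 := Matrix.TransvectionStruct.det_toMatrix_prod L₂
  have h1 : M.rank = (Matrix.diagonal D).rank := by
    rw [← h, Matrix.rank_mul_eq_left_of_isUnit_det Q (P * M) (hdQ ▸ isUnit_one),
      Matrix.rank_mul_eq_right_of_isUnit_det P M (hdP ▸ isUnit_one)]
  have hmapeq : (P.map f) * (M.map f) * (Q.map f) = Matrix.diagonal (f ∘ D) := by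
    rw [← Matrix.map_mul, ← Matrix.map_mul, h]
    ext i j
    by_cases hij : i = j <;> simp [Matrix.diagonal, hij]
  have h2 : (M.map f).rank = (Matrix.diagonal (f ∘ D)).rank := by
    rw [← hmapeq, Matrix.rank_mul_eq_left_of_isUnit_det _ _ (det_map_isUnit f hdQ),
      Matrix.rank_mul_eq_right_of_isUnit_det _ _ (det_map_isUnit f hdP)]
  rw [h1, h2, Matrix.rank_diagonal, Matrix.rank_diagonal]
  exact Fintype.card_congr (Equiv.subtypeEquivRight fun i => by
    simp [Function.comp, map_ne_zero])

lemma finrank_eigenspace_add_rank {F : Type*} [Field F] {n : ℕ}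
    (M : Matrix (Fin n) (Fin n) F) (μ : F) :
    Module.finrank F (Module.End.eigenspace (Matrix.toLin' M) μ) + (M - μ • 1).rank = n := by
  have hker : Module.End.eigenspace (Matrix.toLin' M) μ
      = LinearMap.ker (M - μ • 1).mulVecLin := by
    ext x
    simp [Module.End.mem_eigenspace_iff, Matrix.sub_mulVec, Matrix.smul_mulVec,
      Matrix.one_mulVec, sub_eq_zero, Matrix.toLin'_apply, Matrix.mulVecLin_apply]
  have h := LinearMap.finrank_range_add_finrank_ker (M - μ • 1).mulVecLin
  rw [Module.finrank_fin_fun] at h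
  rw [hker, Matrix.rank]
  omega

lemma map_sub_one {K L : Type*} [Field K] [Field L] (f : K →+* L) {n : Type*}
    [Fintype n] [DecidableEq n] (M : Matrix n n K) : (M - 1).map f = M.map f - 1 := by
  ext i j
  by_cases hij : i = j <;>
    simp [Matrix.map_apply, Matrix.sub_apply, Matrix.one_apply, hij, map_sub]

lemma rank_neg_eq {L : Type*} [Field L] {n : Type*} [Fintype n] [DecidableEq n]
    (M : Matrix n n L) : (-M).rank = M.rank := by
  rw [← neg_one_mul]
  refine Matrix.rank_mul_eq_right_of_isUnit_det _ _ ?_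
  have : ((-1 : Matrix n n L)).det = (-1) ^ Fintype.card n := by
    simpa using Matrix.det_neg (1 : Matrix n n L)
  rw [this]
  exact (isUnit_one.neg).pow _


open Polynomial in
lemma rank_sub_one_eq_rank_add_one {k L : Type*} [Field k] [Field L] {n : ℕ}
    (α : k) (hirr : Irreducible (X ^ 2 - C α : k[X])) (g : k →+* L) (s : L)
    (hs : s ^ 2 = g α) (A₀ : Matrix (Fin n) (Fin n) k) :
    ((s • A₀.map g) - 1).rank = ((s • A₀.map g) + 1).rank := by
  classical
  haveI : Fact (Irreducible (X ^ 2 - C α : k[X])) := ⟨hirr⟩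
  have hlp : (X ^ 2 - C α : k[X]).eval₂ g s = 0 := by simp [hs]
  have hlm : (X ^ 2 - C α : k[X]).eval₂ g (-s) = 0 := by simp [neg_sq, hs]
  have hMp : ((AdjoinRoot.root (X ^ 2 - C α : k[X])) •
      (A₀.map (algebraMap k (AdjoinRoot (X ^ 2 - C α : k[X]))))).map
        (AdjoinRoot.lift g s hlp) = s • A₀.map g := by
    ext i j
    simp [Matrix.map_apply, Matrix.smul_apply, smul_eq_mul, _root_.map_mul,
      AdjoinRoot.algebraMap_eq, AdjoinRoot.lift_root, AdjoinRoot.lift_of]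
  have hMm : ((AdjoinRoot.root (X ^ 2 - C α : k[X])) •
      (A₀.map (algebraMap k (AdjoinRoot (X ^ 2 - C α : k[X]))))).map
        (AdjoinRoot.lift g (-s) hlm) = -(s • A₀.map g) := by
    ext i j
    simp [Matrix.map_apply, Matrix.smul_apply, smul_eq_mul, _root_.map_mul, neg_mul,
      AdjoinRoot.algebraMap_eq, AdjoinRoot.lift_root, AdjoinRoot.lift_of]
  set M := (AdjoinRoot.root (X ^ 2 - C α : k[X])) •
      (A₀.map (algebraMap k (AdjoinRoot (X ^ 2 - C α : k[X])))) with hM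
  have ep : (M - 1).map (AdjoinRoot.lift g s hlp) = (s • A₀.map g) - 1 := by
    rw [map_sub_one, hMp]
  have em : (M - 1).map (AdjoinRoot.lift g (-s) hlm) = -((s • A₀.map g) + 1) := by
    rw [map_sub_one, hMm]; abel
  calc ((s • A₀.map g) - 1).rank
      = ((M - 1).map (AdjoinRoot.lift g s hlp)).rank := by rw [ep]
    _ = (M - 1).rank := rank_map_field _ _
    _ = ((M - 1).map (AdjoinRoot.lift g (-s) hlm)).rank := (rank_map_field _ _).symm
    _ = (-((s • A₀.map g) + 1)).rank := by rw [em]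
    _ = ((s • A₀.map g) + 1).rank := rank_neg_eq _

/-- Eigenvector conjugation for Type 2 involutions: if `A = s·ι(A₀)` with `s² = α ∈ k`,
`A² = I`, then `√α`-conjugation interchanges the `-1`- and `1`-eigenspaces of `A`, and
these eigenspaces have equal dimension. -/
theorem type2_eigenvector_conjugation {k L : Type*} [Field k] [Field L] [Algebra k L]
    (hchar : (2 : k) ≠ 0) {n : ℕ}
    (α : k) (hα : α ≠ 0) (s : L) (hs : s ^ 2 = algebraMap k L α)
    (hind : LinearIndependent k ![(1 : L), s])
    (A₀ : Matrix (Fin n) (Fin n) k) (A : Matrix (Fin n) (Fin n) L)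
    (hAdef : A = s • A₀.map (algebraMap k L)) (hA2 : A * A = 1) :
    (∀ x y : Fin n → k,
      A.mulVec ((fun j => algebraMap k L (x j)) + s • (fun j => algebraMap k L (y j))) =
        -((fun j => algebraMap k L (x j)) + s • (fun j => algebraMap k L (y j))) →
      A.mulVec ((fun j => algebraMap k L (x j)) - s • (fun j => algebraMap k L (y j))) =
        (fun j => algebraMap k L (x j)) - s • (fun j => algebraMap k L (y j))) ∧
    (∀ u v : Fin n → k,
      A.mulVec ((fun j => algebraMap k L (u j)) + s • (fun j => algebraMap k L (v j))) =
        (fun j => algebraMap k L (u j)) + s • (fun j => algebraMap k L (v j)) →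
      A.mulVec ((fun j => algebraMap k L (u j)) - s • (fun j => algebraMap k L (v j))) =
        -((fun j => algebraMap k L (u j)) - s • (fun j => algebraMap k L (v j)))) ∧
    Module.finrank L (Module.End.eigenspace (Matrix.toLin' A) 1) =
      Module.finrank L (Module.End.eigenspace (Matrix.toLin' A) (-1)) := by
  classical
  set f := algebraMap k L with hf
  -- basic coefficient extraction
  have key : ∀ a b : k, f a + s * f b = 0 → a = 0 ∧ b = 0 := by
    intro a b hab
    refine LinearIndependent.pair_iff.mp hind a b ?_
    calc a • (1 : L) + b • s = f a + s * f b := by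
          rw [Algebra.smul_def, Algebra.smul_def, mul_one, mul_comm]
      _ = 0 := hab
  have hout : ∀ a b c d : Fin n → k,
      ((fun j => f (a j)) + s • fun j => f (b j)) =
        ((fun j => f (c j)) + s • fun j => f (d j)) → a = c ∧ b = d := by
    intro a b c d hh
    have h1 : ∀ i, a i - c i = 0 ∧ b i - d i = 0 := by
      intro i
      refine key _ _ ?_
      have := congrFun hh i
      simp only [Pi.add_apply, Pi.smul_apply, smul_eq_mul] at this
      rw [map_sub, map_sub]
      ring_nf
      linear_combination this
    constructor <;> funext i
    · exact sub_eq_zero.mp (h1 i).1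
    · exact sub_eq_zero.mp (h1 i).2
  -- mulVec compatibility
  have hmv : ∀ v : Fin n → k,
      (A₀.map f).mulVec (fun j => f (v j)) = fun i => f (A₀.mulVec v i) := by
    intro v
    funext i
    simp [Matrix.mulVec, dotProduct, Matrix.map_apply, map_sum, _root_.map_mul]
  have hplus : ∀ x y : Fin n → k,
      A.mulVec ((fun j => f (x j)) + s • fun j => f (y j)) =
        (fun j => f ((α • A₀.mulVec y) j)) + s • fun j => f ((A₀.mulVec x) j) := by
    intro x y
    rw [hAdef]
    rw [Matrix.mulVec_add, Matrix.smul_mulVec, Matrix.smul_mulVec,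
      Matrix.mulVec_smul, hmv, hmv]
    funext i
    simp only [Pi.add_apply, Pi.smul_apply, smul_eq_mul]
    have : s * (s * f (A₀.mulVec y i)) = f α * f (A₀.mulVec y i) := by
      rw [← mul_assoc, ← sq, hs]
    rw [this]
    simp only [Pi.smul_apply, smul_eq_mul, ← _root_.map_mul]
    ring
  have hsub : ∀ x y : Fin n → k,
      ((fun j => f (x j)) - s • fun j => f (y j)) =
        ((fun j => f (x j)) + s • fun j => f ((-y : Fin n → k) j)) := by
    intro x y
    funext i
    simp [map_neg, sub_eq_add_neg, mul_neg]
  refine ⟨?_, ?_, ?_⟩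
  · -- part 1
    intro x y hxy
    have h0 : ((fun j => f ((α • A₀.mulVec y) j)) + s • fun j => f ((A₀.mulVec x) j)) =
        ((fun j => f ((-x : Fin n → k) j)) + s • fun j => f ((-y : Fin n → k) j)) := by
      rw [← hplus x y, hxy]
      funext i
      simp only [Pi.add_apply, Pi.neg_apply, Pi.smul_apply, smul_eq_mul, map_neg]
      ring
    obtain ⟨hA1, hB1⟩ := hout _ _ _ _ h0
    have hA1' : α • A₀.mulVec (-y) = x := by
      rw [Matrix.mulVec_neg, smul_neg, hA1]
      simp
    rw [hsub x y, hplus x (-y), hA1', hB1]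
  · -- part 2
    intro u v huv
    have h0 : ((fun j => f ((α • A₀.mulVec v) j)) + s • fun j => f ((A₀.mulVec u) j)) =
        ((fun j => f (u j)) + s • fun j => f (v j)) := by
      rw [← hplus u v, huv]
    obtain ⟨hA1, hB1⟩ := hout _ _ _ _ h0
    have hA1' : α • A₀.mulVec (-v) = -u := by
      rw [Matrix.mulVec_neg, smul_neg, hA1]
    rw [hsub u v, hplus u (-v), hA1', hB1]
    funext i
    simp only [Pi.add_apply, Pi.sub_apply, Pi.neg_apply, Pi.smul_apply, smul_eq_mul, map_neg]
    ring
  · -- part 3: equal dimensions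
    -- α is not a square in k
    have hnsq : ∀ b : k, b ^ 2 ≠ α := by
      intro b hb
      have hb2 : (f b) ^ 2 = f α := by rw [← map_pow, hb]
      have hfact : (s - f b) * (s + f b) = 0 := by
        have : s ^ 2 - (f b) ^ 2 = 0 := by rw [hs, hb2, sub_self]
        linear_combination this
      rcases mul_eq_zero.mp hfact with h | h
      · have h' : f b + s * f (-1 : k) = 0 := by
          rw [map_neg, _root_.map_one, mul_neg_one]
          linear_combination -h
        exact one_ne_zero (neg_eq_zero.mp ((key b (-1) h').2))
      · have h' : f b + s * f (1 : k) = 0 := by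
          rw [_root_.map_one, mul_one]
          linear_combination h
        exact one_ne_zero ((key b 1 h').2)
    have hirr : Irreducible (Polynomial.X ^ 2 - Polynomial.C α) :=
      X_pow_sub_C_irreducible_of_prime Nat.prime_two hnsq
    have hrank : (A - 1).rank = (A + 1).rank := by
      rw [hAdef]
      exact rank_sub_one_eq_rank_add_one α hirr f s hs A₀
    have h₁ := finrank_eigenspace_add_rank A 1
    have h₂ := finrank_eigenspace_add_rank A (-1)
    rw [one_smul] at h₁
    rw [neg_smul, one_smul, sub_neg_eq_add] at h₂
    omega
end

section
/- Assume SO(n,k,β) is friendly. Let L be a field extension of k, let α ∈ k be nonzero, and let s ∈ L satisfy s² = ι(α), where 1 and s are linearly independent over k. Let A₀ ∈ M_n(k), set A = s·ι(A₀), and assume Aᵀ·M̄·A = M̄ and A² = I_n (so Inn_A is a Type 2 k-involution of SO(n,k,β)). Then n is even and there exists X ∈ GL(n,k) such that A = (−s·α⁻¹)·ι(X·N_α·X⁻¹), where N_α is the n×n block matrix [[0, I_{n/2}],[α·I_{n/2}, 0]] over k, and Xᵀ·M·X has block form [[X₁, X₂],[X₂, α⁻¹·X₁]] where X₁ and X₂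 are diagonal (n/2)×(n/2) matrices over k. -/
/-!
The matrix `C = -α A₀` is defined over `k`, satisfies `C² = α` and is self-adjoint for `β`, and
`α` is not a square in `k` because `1, s` are independent. Letting `√α` act by `C` turns `kⁿ` into
a vector space over `K = k(√α)`, on which `f(u, v) = β(u, v) + α⁻¹ β(u, C v) √α` is a symmetric
`K`-bilinear form. A `K`-orthogonal basis `(b_j)` for `f` gives the `k`-basis
`(b_j, α⁻¹ C b_j)`, in which `C` has matrix `[[0, I], [α I, 0]]` and `β` has the block form
`[[X₁, X₂], [X₂, α⁻¹ X₁]]` with `X₁, X₂` diagonal.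
-/

open Matrix Module

theorem linearIndependent_one_iff_forall_sq_ne {k L : Type*} [Field k] [Field L] [Algebra k L]
    {α : k} {t : L} (ht : t ^ 2 = algebraMap k L α) :
    LinearIndependent k ![1, t] ↔ ∀ c : k, c ^ 2 ≠ α := by
  rw [LinearIndependent.pair_iff' one_ne_zero]
  simp only [Algebra.smul_def, mul_one]
  constructor
  · rintro h c rfl
    have : (t - algebraMap k L c) * (t + algebraMap k L c) = 0 := by
      rw [map_pow] at ht; linear_combination ht
    rcases mul_eq_zero.mp this with h' | h'
    · exact h c (sub_eq_zero.mp h').symm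
    · exact h (-c) (by rw [map_neg]; linear_combination -h')
  · rintro h c rfl
    exact h c ((algebraMap k L).injective (by rw [map_pow, ht]))

section QuadraticExtension

variable {k K : Type*} [Field k] [Field K] [Algebra k K] {α : k} {t : K}

theorem exists_eq_algebraMap_add_algebraMap_mul (hind : LinearIndependent k ![1, t])
    (hK : finrank k K = 2) (c : K) :
    ∃ a b : k, c = algebraMap k K a + algebraMap k K b * t := by
  let b₀ := basisOfLinearIndependentOfCardEqFinrank hind (by simp [hK])
  refine ⟨b₀.repr c 0, b₀.repr c 1, ?_⟩
  conv_lhs => rw [← b₀.sum_repr c]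
  simp [b₀, Fin.sum_univ_two, Algebra.smul_def]

theorem eq_zero_of_algebraMap_add_algebraMap_mul_eq_zero (hind : LinearIndependent k ![1, t])
    {a b : k} (h : algebraMap k K a + algebraMap k K b * t = 0) : a = 0 ∧ b = 0 :=
  LinearIndependent.pair_iff.mp hind a b (by simpa [Algebra.smul_def] using h)

variable {V : Type*} [AddCommGroup V] [Module K V] [Module k V] [IsScalarTower k K V]

theorem exists_isSymm_bilinForm_lift (hα : α ≠ 0) (ht : t ^ 2 = algebraMap k K α)
    (hspan : ∀ c : K, ∃ a b : k, c = algebraMap k K a + algebraMap k K b * t)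
    (β : LinearMap.BilinForm k V) (hβ : β.IsSymm) (hβt : ∀ u v, β (t • u) v = β u (t • v)) :
    ∃ f : LinearMap.BilinForm K V, LinearMap.IsSymm f ∧ ∀ u v,
      f u v = algebraMap k K (β u v) + algebraMap k K (α⁻¹ * β u (t • v)) * t := by
  set F : V → V → K := fun u v =>
    algebraMap k K (β u v) + algebraMap k K (α⁻¹ * β u (t • v)) * t with hF
  have htt : ∀ v : V, t • t • v = α • v := by
    intro v
    rw [smul_smul, ← sq, ht, algebraMap_smul]
  have F_add : ∀ u v v', F u (v + v') = F u v + F u v' := by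
    intro u v v'
    simp only [hF, smul_add, map_add, mul_add, add_mul]
    ring
  have F_smul_k : ∀ (a : k) u v, F u (a • v) = algebraMap k K a * F u v := by
    intro a u v
    simp only [hF, smul_comm t a, map_smul, smul_eq_mul, map_mul]
    ring
  have F_smul_t : ∀ u v, F u (t • v) = t * F u v := by
    intro u v
    have h₁ : algebraMap k K (α⁻¹ * β u (t • t • v)) * t = algebraMap k K (β u v) * t := by
      rw [htt, map_smul, smul_eq_mul, inv_mul_cancel_left₀ hα]
    have h₂ : t * (algebraMap k K (α⁻¹ * β u (t • v)) * t) = algebraMap k K (β u (t • v)) := by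
      rw [mul_comm, mul_assoc, ← sq, ht, ← map_mul, mul_right_comm, inv_mul_cancel₀ hα, one_mul]
    simp only [hF, h₁, mul_add, h₂]
    ring
  have F_smul : ∀ (c : K) u v, F u (c • v) = c * F u v := by
    intro c u v
    obtain ⟨a, b, rfl⟩ := hspan c
    rw [add_smul, F_add, mul_smul, algebraMap_smul, algebraMap_smul, F_smul_k, F_smul_k,
      F_smul_t]
    ring
  have F_symm : ∀ u v, F u v = F v u := by
    intro u v
    simp only [hF, hβ.eq u v, ← hβt, hβ.eq (t • v) u]
  refine ⟨LinearMap.mk₂ K F (fun u u' v => ?_) (fun c u v => ?_) F_add F_smul, ⟨F_symm⟩,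
    fun _ _ => rfl⟩
  · rw [F_symm, F_add, F_symm v, F_symm v]
  · rw [F_symm, F_smul, F_symm v, smul_eq_mul]

theorem exists_basis_sum_of_quadratic [FiniteDimensional K V] (hchar : (2 : k) ≠ 0)
    (hα : α ≠ 0) (ht : t ^ 2 = algebraMap k K α) (hind : LinearIndependent k ![1, t])
    (hK : finrank k K = 2) (β : LinearMap.BilinForm k V) (hβ : β.IsSymm)
    (hβt : ∀ u v, β (t • u) v = β u (t • v)) :
    ∃ (m : ℕ) (b : Basis (Fin m ⊕ Fin m) k V), (∀ j, b (.inr j) = α⁻¹ • t • b (.inl j)) ∧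
      ∀ i j, i ≠ j → β (b (.inl i)) (b (.inl j)) = 0 ∧ β (b (.inl i)) (b (.inr j)) = 0 := by
  obtain ⟨f, hf, hfβ⟩ := exists_isSymm_bilinForm_lift hα ht
    (exists_eq_algebraMap_add_algebraMap_mul hind hK) β hβ hβt
  have : Invertible (2 : K) := invertibleOfNonzero <| by
    rw [← map_ofNat (algebraMap k K) 2]; exact (map_ne_zero _).mpr hchar
  obtain ⟨c, hc⟩ := f.exists_orthogonal_basis hf
  let b₀ : Basis (Fin 2) k K :=
    (basisOfLinearIndependentOfCardEqFinrank hind (by simp [hK])).unitsSMul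
      ![1, (Units.mk0 α hα)⁻¹]
  let e : Fin 2 × Fin (finrank K V) ≃ Fin (finrank K V) ⊕ Fin (finrank K V) :=
    (finTwoEquiv.prodCongr (Equiv.refl _)).trans (Equiv.boolProdEquivSum _)
  refine ⟨finrank K V, (b₀.smulTower c).reindex e, fun j => ?_, fun i j hij => ?_⟩
  · simp [b₀, e, finTwoEquiv, Basis.unitsSMul_apply, Units.smul_def, smul_assoc]
  · have h := hc hij
    simp only [hfβ] at h
    obtain ⟨h₁, h₂⟩ := eq_zero_of_algebraMap_add_algebraMap_mul_eq_zero hind h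
    simpa [b₀, e, finTwoEquiv, Basis.unitsSMul_apply, Units.smul_def, smul_assoc, h₁, hα]
      using h₂

end QuadraticExtension

open Polynomial in
theorem exists_basis_sum_of_mul_self_eq {k V : Type*} [Field k] [AddCommGroup V] [Module k V]
    [FiniteDimensional k V] (hchar : (2 : k) ≠ 0) {α : k} (hα : ∀ c : k, c ^ 2 ≠ α)
    (T : Module.End k V) (hT : T * T = algebraMap k _ α) (β : LinearMap.BilinForm k V)
    (hβ : β.IsSymm) (hTβ : ∀ u v, β (T u) v = β u (T v)) :
    ∃ (m : ℕ) (b : Basis (Fin m ⊕ Fin m) k V), (∀ j, b (.inr j) = α⁻¹ • T (b (.inl j))) ∧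
      ∀ i j, i ≠ j → β (b (.inl i)) (b (.inl j)) = 0 ∧ β (b (.inl i)) (b (.inr j)) = 0 := by
  set q : k[X] := X ^ 2 - C α with hq
  have : Fact (Irreducible q) := ⟨X_pow_sub_C_irreducible_of_prime Nat.prime_two hα⟩
  have hTq : aeval T q = 0 := by simp [hq, sq, hT]
  let ψ : AdjoinRoot q →ₐ[k] Module.End k V :=
    Ideal.Quotient.liftₐ _ (aeval T) fun p hp => by
      obtain ⟨r, rfl⟩ := Ideal.mem_span_singleton.mp hp
      rw [map_mul, hTq, zero_mul]
  let _ : Module (AdjoinRoot q) V := Module.compHom V ψ.toRingHom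
  have : IsScalarTower k (AdjoinRoot q) V :=
    ⟨fun a c v => show ψ (a • c) v = a • ψ c v by rw [map_smul]; rfl⟩
  have : FiniteDimensional (AdjoinRoot q) V := .of_restrictScalars_finite k (AdjoinRoot q) V
  have hroot : ∀ v : V, AdjoinRoot.root q • v = T v := fun v =>
    congrArg (· v) (aeval_X T)
  have ht : AdjoinRoot.root q ^ 2 = algebraMap k (AdjoinRoot q) α := by
    have h := AdjoinRoot.aeval_eq (f := q) q
    rw [AdjoinRoot.mk_self, hq] at h
    simpa [sub_eq_zero] using h
  have hK : finrank k (AdjoinRoot q) = 2 :=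
    finrank_quotient_span_eq_natDegree.trans (natDegree_X_pow_sub_C)
  obtain ⟨m, b, hb, horth⟩ := exists_basis_sum_of_quadratic hchar
    (fun h => hα 0 (by simp [h])) ht ((linearIndependent_one_iff_forall_sq_ne ht).mpr hα) hK
    β hβ (by simpa only [hroot] using hTβ)
  exact ⟨m, b, by simpa only [hroot] using hb, horth⟩

section BlockMatrices

variable {k V ι : Type*} [Field k] [AddCommGroup V] [Module k V] [Fintype ι] [DecidableEq ι]
  {α : k} {T : Module.End k V} (b : Basis (ι ⊕ ι) k V)

theorem LinearMap.toMatrix_eq_fromBlocks_of_mul_self_eq (hα : α ≠ 0)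
    (hT : T * T = algebraMap k _ α) (hb : ∀ j, b (.inr j) = α⁻¹ • T (b (.inl j))) :
    LinearMap.toMatrix b b T = fromBlocks 0 1 (α • 1) 0 := by
  have hinl : ∀ j, T (b (.inl j)) = α • b (.inr j) := fun j => by
    rw [hb, smul_smul, mul_inv_cancel₀ hα, one_smul]
  have hinr : ∀ j, T (b (.inr j)) = b (.inl j) := fun j => by
    rw [hb, map_smul, ← Module.End.mul_apply, hT, Module.algebraMap_end_apply, smul_smul,
      inv_mul_cancel₀ hα, one_smul]
  ext (i | i) (j | j) <;>
    simp [LinearMap.toMatrix_apply, hinl, hinr, Finsupp.single_apply, one_apply, eq_comm]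

theorem LinearMap.BilinForm.toMatrix_eq_fromBlocks_of_mul_self_eq (hα : α ≠ 0)
    (hT : T * T = algebraMap k _ α) (hb : ∀ j, b (.inr j) = α⁻¹ • T (b (.inl j)))
    (β : LinearMap.BilinForm k V) (hβ : β.IsSymm) (hTβ : ∀ u v, β (T u) v = β u (T v))
    (horth : ∀ i j, i ≠ j → β (b (.inl i)) (b (.inl j)) = 0 ∧ β (b (.inl i)) (b (.inr j)) = 0) :
    BilinForm.toMatrix b β =
      fromBlocks (diagonal fun i => β (b (.inl i)) (b (.inl i)))
        (diagonal fun i => β (b (.inl i)) (b (.inr i)))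
        (diagonal fun i => β (b (.inl i)) (b (.inr i)))
        (α⁻¹ • diagonal fun i => β (b (.inl i)) (b (.inl i))) := by
  have hrr : ∀ i j, β (b (.inr i)) (b (.inr j)) = α⁻¹ * β (b (.inl i)) (b (.inl j)) := by
    intro i j
    rw [hb, hb, map_smul, map_smul, LinearMap.smul_apply, hTβ, ← Module.End.mul_apply, hT,
      Module.algebraMap_end_apply, map_smul, smul_eq_mul, smul_eq_mul, smul_eq_mul,
      inv_mul_cancel_left₀ hα]
  have hrl : ∀ i j, i ≠ j → β (b (.inr i)) (b (.inl j)) = 0 := fun i j hij => by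
    rw [hβ.eq]; exact (horth j i hij.symm).2
  ext (i | i) (j | j) <;> by_cases hij : i = j <;>
    simp [BilinForm.toMatrix_apply, hrr, hrl, hij, horth, hβ.eq (b (.inr j))]

end BlockMatrices

theorem LinearMap.toMatrix_reindex {k V ι ι' : Type*} [Field k] [AddCommGroup V] [Module k V]
    [Fintype ι] [DecidableEq ι] [Fintype ι'] [DecidableEq ι'] (b : Basis ι k V) (e : ι ≃ ι')
    (T : Module.End k V) :
    LinearMap.toMatrix (b.reindex e) (b.reindex e) T =
      reindex e e (LinearMap.toMatrix b b T) := by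
  ext; simp [LinearMap.toMatrix_apply]

theorem LinearMap.BilinForm.toMatrix_reindex {k V ι ι' : Type*} [Field k] [AddCommGroup V]
    [Module k V] [Fintype ι] [DecidableEq ι] [Fintype ι'] [DecidableEq ι'] (b : Basis ι k V)
    (e : ι ≃ ι') (β : LinearMap.BilinForm k V) :
    BilinForm.toMatrix (b.reindex e) β = reindex e e (BilinForm.toMatrix b β) := by
  ext; simp [BilinForm.toMatrix_apply]

theorem Matrix.exists_conj_fromBlocks_of_mul_self_eq {k : Type*} [Field k]
    (hchar : (2 : k) ≠ 0) {n : ℕ} {M : Matrix (Fin n) (Fin n) k} (hM : M.IsSymm) {α : k}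
    (hα : ∀ c : k, c ^ 2 ≠ α)
    {C : Matrix (Fin n) (Fin n) k} (hC2 : C * C = α • 1) (hCM : Cᵀ * M = M * C) :
    ∃ (m : ℕ) (hm : n = m + m) (X : Matrix (Fin n) (Fin n) k), IsUnit X ∧
      C = X * (Matrix.reindex (finSumFinEquiv.trans (finCongr hm.symm))
            (finSumFinEquiv.trans (finCongr hm.symm))
            (Matrix.fromBlocks 0 1 (α • (1 : Matrix (Fin m) (Fin m) k)) 0)) * X⁻¹ ∧
      ∃ X₁ X₂ : Matrix (Fin m) (Fin m) k, X₁.IsDiag ∧ X₂.IsDiag ∧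
        Xᵀ * M * X = Matrix.reindex (finSumFinEquiv.trans (finCongr hm.symm))
          (finSumFinEquiv.trans (finCongr hm.symm))
          (Matrix.fromBlocks X₁ X₂ X₂ (α⁻¹ • X₁)) := by
  have hα₀ : α ≠ 0 := fun h => hα 0 (by simp [h])
  have hT : toLin' C * toLin' C = algebraMap k _ α := by
    rw [Module.End.mul_eq_comp, ← toLin'_mul, hC2]
    refine LinearMap.ext fun v => ?_
    simp [Algebra.algebraMap_eq_smul_one]
  have hTβ : ∀ u v, toBilin' M (toLin' C u) v = toBilin' M u (toLin' C v) := by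
    intro u v
    simp only [toBilin'_apply', toLin'_apply]
    rw [mulVec_mulVec, ← hCM, ← mulVec_mulVec, dotProduct_mulVec u Cᵀ, vecMul_transpose]
  obtain ⟨m, b, hb, horth⟩ := exists_basis_sum_of_mul_self_eq hchar hα (toLin' C) hT
    (toBilin' M) (isSymm_toBilin'_iff_isSymm.mpr hM) hTβ
  have hm : n = m + m := by simpa using (finrank_eq_card_basis b)
  set e := finSumFinEquiv.trans (finCongr hm.symm)
  set X := (Pi.basisFun k (Fin n)).toMatrix (b.reindex e)
  have hXinv : X⁻¹ = (b.reindex e).toMatrix (Pi.basisFun k (Fin n)) :=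
    inv_eq_right_inv (Basis.toMatrix_mul_toMatrix_flip _ _)
  refine ⟨m, hm, X, ?_, ?_, diagonal fun i => toBilin' M (b (.inl i)) (b (.inl i)),
    diagonal fun i => toBilin' M (b (.inl i)) (b (.inr i)), isDiag_diagonal _,
    isDiag_diagonal _, ?_⟩
  · have := (Pi.basisFun k (Fin n)).invertibleToMatrix (b.reindex e)
    exact isUnit_of_invertible X
  · rw [hXinv, ← LinearMap.toMatrix_eq_fromBlocks_of_mul_self_eq b hα₀ hT hb,
      ← LinearMap.toMatrix_reindex, basis_toMatrix_mul_linearMap_toMatrix_mul_basis_toMatrix,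
      LinearMap.toMatrix_eq_toMatrix', LinearMap.toMatrix'_toLin']
  · rw [← LinearMap.BilinForm.toMatrix_eq_fromBlocks_of_mul_self_eq b hα₀ hT hb _
      (isSymm_toBilin'_iff_isSymm.mpr hM) hTβ horth, ← LinearMap.BilinForm.toMatrix_reindex,
      ← LinearMap.BilinForm.toMatrix_mul_basis_toMatrix (Pi.basisFun k (Fin n)),
      LinearMap.BilinForm.toMatrix_basisFun, LinearMap.BilinForm.toMatrix'_toBilin']

theorem Matrix.smul_map_mul_smul_map {k L : Type*} [Field k] [Field L] [Algebra k L]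
    {m n p : Type*} [Fintype n] {α : k} {s : L} (hs : s ^ 2 = algebraMap k L α) (P : Matrix m n k)
    (Q : Matrix n p k) :
    (s • P.map (algebraMap k L)) * (s • Q.map (algebraMap k L)) =
      (α • (P * Q)).map (algebraMap k L) := by
  rw [Matrix.map_smul _ α fun a => by simp [Algebra.smul_def], ← algebraMap_smul L α,
    Matrix.map_mul, Matrix.smul_mul, Matrix.mul_smul, smul_smul, ← sq, hs]

theorem Matrix.transpose_mul_eq_mul_of_smul {k : Type*} [Field k] {n : Type*} [Fintype n]
    [DecidableEq n] {α : k} {A₀ M : Matrix n n k} (hA₀2 : α • (A₀ * A₀) = 1)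
    (hA₀M : α • (A₀ᵀ * M * A₀) = M) : A₀ᵀ * M = M * A₀ := by
  calc A₀ᵀ * M = A₀ᵀ * M * (α • (A₀ * A₀)) := by rw [hA₀2, Matrix.mul_one]
    _ = α • (A₀ᵀ * M * A₀) * A₀ := by
      simp only [Matrix.mul_smul, Matrix.smul_mul, Matrix.mul_assoc]
    _ = M * A₀ := by rw [hA₀M]

theorem type2_structure_general {k L : Type*} [Field k] [Field L] [Algebra k L]
    (hchar : (2 : k) ≠ 0) {n : ℕ}
    (M : Matrix (Fin n) (Fin n) k) (hMdiag : M.IsDiag)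
    (α : k) (s : L) (hs : s ^ 2 = algebraMap k L α)
    (hind : LinearIndependent k ![(1 : L), s])
    (A₀ : Matrix (Fin n) (Fin n) k) (A : Matrix (Fin n) (Fin n) L)
    (hAdef : A = s • A₀.map (algebraMap k L))
    (hAorth : Aᵀ * M.map (algebraMap k L) * A = M.map (algebraMap k L))
    (hA2 : A * A = 1) :
    ∃ (m : ℕ) (hm : n = m + m) (X : Matrix (Fin n) (Fin n) k), IsUnit X ∧
      A = (-(s * (algebraMap k L α)⁻¹)) •
        (X * (Matrix.reindex (finSumFinEquiv.trans (finCongr hm.symm))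
            (finSumFinEquiv.trans (finCongr hm.symm))
            (Matrix.fromBlocks 0 1 (α • (1 : Matrix (Fin m) (Fin m) k)) 0)) *
          X⁻¹).map (algebraMap k L) ∧
      ∃ X₁ X₂ : Matrix (Fin m) (Fin m) k, X₁.IsDiag ∧ X₂.IsDiag ∧
        Xᵀ * M * X = Matrix.reindex (finSumFinEquiv.trans (finCongr hm.symm))
          (finSumFinEquiv.trans (finCongr hm.symm))
          (Matrix.fromBlocks X₁ X₂ X₂ (α⁻¹ • X₁)) := by
  have hα : ∀ c : k, c ^ 2 ≠ α := (linearIndependent_one_iff_forall_sq_ne hs).mp hind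
  have hα₀ : α ≠ 0 := fun h => hα 0 (by simp [h])
  have hA₀2 : α • (A₀ * A₀) = 1 := map_injective (algebraMap k L).injective <| by
    beta_reduce
    rw [← smul_map_mul_smul_map hs, ← hAdef, hA2, Matrix.map_one _ (map_zero _) (map_one _)]
  have hA₀M : α • (A₀ᵀ * M * A₀) = M := map_injective (algebraMap k L).injective <| by
    beta_reduce
    rw [← hAorth, hAdef, transpose_smul, ← transpose_map, Matrix.smul_mul, ← Matrix.map_mul,
      ← Matrix.smul_mul, smul_map_mul_smul_map hs, Matrix.smul_mul]
  obtain ⟨m, hm, X, hX, hC, X₁, X₂, hX₁, hX₂, hXMX⟩ :=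
    exists_conj_fromBlocks_of_mul_self_eq (C := -(α • A₀)) hchar hMdiag.isSymm hα
      (by rw [neg_mul_neg, smul_mul_smul_comm, ← smul_smul, hA₀2])
      (by rw [transpose_neg, transpose_smul, neg_mul, mul_neg, Matrix.smul_mul, Matrix.mul_smul,
        transpose_mul_eq_mul_of_smul hA₀2 hA₀M])
  refine ⟨m, hm, X, hX, ?_, X₁, X₂, hX₁, hX₂, hXMX⟩
  rw [← hC, hAdef]
  have hια : algebraMap k L α ≠ 0 := (map_ne_zero _).mpr hα₀
  ext i j
  simp only [Matrix.smul_apply, map_apply, smul_eq_mul, Matrix.neg_apply, map_neg, map_mul,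
    mul_neg, neg_mul, neg_neg]
  field_simp

/-- Structure of Type 2 involutions: if `A = s·ι(A₀)` with `s² = α ∈ k`, `s ∉ k`,
`AᵀM̄A = M̄` and `A² = I`, then `n` is even and
`A = (-s/α)·ι(X · [[0, I],[αI, 0]] · X⁻¹)` with
`XᵀMX = [[X₁, X₂],[X₂, α⁻¹X₁]]`, `X₁, X₂` diagonal. -/
theorem type2_structure {k L : Type*} [Field k] [Field L] [Algebra k L]
    (hchar : (2 : k) ≠ 0) {n : ℕ} (hn : 2 < n)
    (M : Matrix (Fin n) (Fin n) k) (hMdiag : M.IsDiag) (hM : IsUnit M)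
    (hfriendly : ∀ s t : Fin n, ∃ x y : k, y ≠ 0 ∧ x ^ 2 + (M s s / M t t) * y ^ 2 = 1)
    (α : k) (hα : α ≠ 0) (s : L) (hs : s ^ 2 = algebraMap k L α)
    (hind : LinearIndependent k ![(1 : L), s])
    (A₀ : Matrix (Fin n) (Fin n) k) (A : Matrix (Fin n) (Fin n) L)
    (hAdef : A = s • A₀.map (algebraMap k L))
    (hAorth : Aᵀ * M.map (algebraMap k L) * A = M.map (algebraMap k L))
    (hA2 : A * A = 1) :
    ∃ (m : ℕ) (hm : n = m + m) (X : Matrix (Fin n) (Fin n) k), IsUnit X ∧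
      A = (-(s * (algebraMap k L α)⁻¹)) •
        (X * (Matrix.reindex (finSumFinEquiv.trans (finCongr hm.symm))
            (finSumFinEquiv.trans (finCongr hm.symm))
            (Matrix.fromBlocks 0 1 (α • (1 : Matrix (Fin m) (Fin m) k)) 0)) *
          X⁻¹).map (algebraMap k L) ∧
      ∃ X₁ X₂ : Matrix (Fin m) (Fin m) k, X₁.IsDiag ∧ X₂.IsDiag ∧
        Xᵀ * M * X = Matrix.reindex (finSumFinEquiv.trans (finCongr hm.symm))
          (finSumFinEquiv.trans (finCongr hm.symm))
          (Matrix.fromBlocks X₁ X₂ X₂ (α⁻¹ • X₁)) :=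
  type2_structure_general hchar M hMdiag α s hs hind A₀ A hAdef hAorth hA2
end

section
/- Let n be even, let L be a field extension of k, let α ∈ k be nonzero, and let s ∈ L satisfy s² = ι(α) with 1 and s linearly independent over k. Let N_α be the n×n block matrix [[0, I_{n/2}],[α·I_{n/2}, 0]] over k. Let X, Y ∈ GL(n,k) and set A = (−s·α⁻¹)·ι(X·N_α·X⁻¹) and B = (−s·α⁻¹)·ι(Y·N_α·Y⁻¹), and assume Aᵀ·M̄·A = M̄ and Bᵀ·M̄·B = M̄ with Xᵀ·M·X = [[X₁, X₂],[X₂, α⁻¹·X₁]] and Yᵀ·M·Y = [[Y₁, Y₂],[Y₂, α⁻¹·Y₁]] where X₁, X₂, Y₁, Y₂ are diagonal (n/2)×(n/2) matrices. Then the following are equivalent: (1) there exists Q ∈ O(n,k,β) with ι(Q)⁻¹·A·ι(Q) = B or ι(Q)⁻¹·A·ι(Q) = −B; (2) there exist (n/2)×(n/2) matrices R₁, R₂ over k such that either the block matrix R = [[R₁, R₂],[α·R₂, R₁]] is invertible and Yᵀ·M·Y = Rᵀ·(Xᵀ·M·X)·R, or the block matrix R = [[R₁, R₂],[−α·R₂,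 −R₁]] is invertible and Yᵀ·M·Y = Rᵀ·(Xᵀ·M·X)·R. -/
open Matrix

section Helpers
variable {k : Type*} [Field k] {n m : ℕ}

private lemma reindex_mul_aux (e : (Fin m ⊕ Fin m) ≃ Fin n) (P Q : Matrix (Fin m ⊕ Fin m) (Fin m ⊕ Fin m) k) :
    Matrix.reindex e e P * Matrix.reindex e e Q = Matrix.reindex e e (P * Q) := by
  simp [Matrix.reindex_apply, Matrix.submatrix_mul_equiv P Q _ e.symm _]

private lemma reindex_neg_aux (e : (Fin m ⊕ Fin m) ≃ Fin n) (P : Matrix (Fin m ⊕ Fin m) (Fin m ⊕ Fin m) k) :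
    -(Matrix.reindex e e P) = Matrix.reindex e e (-P) := by
  ext i j
  simp [Matrix.reindex_apply]

private lemma comm_blocks (e : (Fin m ⊕ Fin m) ≃ Fin n) {α : k} (hα : α ≠ 0)
    (Z : Matrix (Fin n) (Fin n) k) :
    (Matrix.reindex e e (Matrix.fromBlocks 0 1 (α • (1 : Matrix (Fin m) (Fin m) k)) 0)) * Z =
      Z * (Matrix.reindex e e (Matrix.fromBlocks 0 1 (α • (1 : Matrix (Fin m) (Fin m) k)) 0)) ↔
    ∃ R₁ R₂ : Matrix (Fin m) (Fin m) k,
      Z = Matrix.reindex e e (Matrix.fromBlocks R₁ R₂ (α • R₂) R₁) := by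
  constructor
  · intro h
    set W := Matrix.reindex e.symm e.symm Z with hW
    have hZ : Z = Matrix.reindex e e W := by simp [hW]
    rw [hZ, reindex_mul_aux, reindex_mul_aux] at h
    have h' := (Matrix.reindex e e).injective h
    rw [← Matrix.fromBlocks_toBlocks W, Matrix.fromBlocks_multiply,
      Matrix.fromBlocks_multiply] at h'
    have h21 := congrArg Matrix.toBlocks₂₁ h'
    have h22 := congrArg Matrix.toBlocks₂₂ h'
    simp only [Matrix.toBlocks_fromBlocks₂₁, Matrix.toBlocks_fromBlocks₂₂, Matrix.smul_mul,
      Matrix.mul_smul, zero_mul, mul_zero, one_mul, mul_one, add_zero, zero_add] at h21 h22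
    have e22 : W.toBlocks₂₂ = W.toBlocks₁₁ :=
      (smul_right_injective (Matrix (Fin m) (Fin m) k) hα h21).symm
    have hWeq : W = Matrix.fromBlocks W.toBlocks₁₁ W.toBlocks₁₂ (α • W.toBlocks₁₂)
        W.toBlocks₁₁ := by
      conv_lhs => rw [← Matrix.fromBlocks_toBlocks W]
      rw [e22, ← h22]
    exact ⟨W.toBlocks₁₁, W.toBlocks₁₂, hZ.trans (congrArg _ hWeq)⟩
  · rintro ⟨R₁, R₂, rfl⟩
    rw [reindex_mul_aux, reindex_mul_aux]
    congr 1
    simp [Matrix.fromBlocks_multiply, Matrix.smul_mul, Matrix.mul_smul]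

private lemma anticomm_blocks (e : (Fin m ⊕ Fin m) ≃ Fin n) {α : k} (hα : α ≠ 0)
    (Z : Matrix (Fin n) (Fin n) k) :
    (Matrix.reindex e e (Matrix.fromBlocks 0 1 (α • (1 : Matrix (Fin m) (Fin m) k)) 0)) * Z =
      Z * (-(Matrix.reindex e e (Matrix.fromBlocks 0 1 (α • (1 : Matrix (Fin m) (Fin m) k)) 0))) ↔
    ∃ R₁ R₂ : Matrix (Fin m) (Fin m) k,
      Z = Matrix.reindex e e (Matrix.fromBlocks R₁ R₂ (-(α • R₂)) (-R₁)) := by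
  rw [reindex_neg_aux]
  constructor
  · intro h
    set W := Matrix.reindex e.symm e.symm Z with hW
    have hZ : Z = Matrix.reindex e e W := by simp [hW]
    rw [hZ, reindex_mul_aux, reindex_mul_aux] at h
    have h' := (Matrix.reindex e e).injective h
    rw [← Matrix.fromBlocks_toBlocks W, Matrix.fromBlocks_neg, Matrix.fromBlocks_multiply,
      Matrix.fromBlocks_multiply] at h'
    have h21 := congrArg Matrix.toBlocks₂₁ h'
    have h22 := congrArg Matrix.toBlocks₂₂ h'
    simp only [Matrix.toBlocks_fromBlocks₂₁, Matrix.toBlocks_fromBlocks₂₂, Matrix.smul_mul,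
      Matrix.mul_smul, zero_mul, mul_zero, one_mul, mul_one, add_zero, zero_add, neg_zero,
      mul_neg, Matrix.mul_neg, Matrix.mul_one, neg_smul, smul_neg] at h21 h22
    -- h21 : α • W₁₁ = -(α • W₂₂),  h22 : α • W₁₂ = -W₂₁
    have e22 : W.toBlocks₂₂ = -W.toBlocks₁₁ := by
      have : α • W.toBlocks₁₁ = α • (-W.toBlocks₂₂) := by rw [smul_neg, h21]
      have := smul_right_injective (Matrix (Fin m) (Fin m) k) hα this
      rw [this]; rw [neg_neg]
    have e21 : W.toBlocks₂₁ = -(α • W.toBlocks₁₂) := by rw [h22, neg_neg]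
    have hWeq : W = Matrix.fromBlocks W.toBlocks₁₁ W.toBlocks₁₂ (-(α • W.toBlocks₁₂))
        (-W.toBlocks₁₁) := by
      conv_lhs => rw [← Matrix.fromBlocks_toBlocks W]
      rw [e22, e21]
    exact ⟨W.toBlocks₁₁, W.toBlocks₁₂, hZ.trans (congrArg _ hWeq)⟩
  · rintro ⟨R₁, R₂, rfl⟩
    rw [reindex_mul_aux, reindex_mul_aux]
    congr 1
    rw [Matrix.fromBlocks_neg]
    simp [Matrix.fromBlocks_multiply, Matrix.smul_mul, Matrix.mul_smul]

end Helpers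

section Helpers2
variable {k : Type*} [Field k] {n : ℕ}

private lemma congr_of_orth (M X Y Q : Matrix (Fin n) (Fin n) k)
    (hXd : IsUnit X.det) (hQ : Qᵀ * M * Q = M) :
    Yᵀ * M * Y = (X⁻¹ * (Q * Y))ᵀ * (Xᵀ * M * X) * (X⁻¹ * (Q * Y)) := by
  haveI := Matrix.invertibleOfIsUnitDet X hXd
  haveI := Matrix.invertibleOfIsUnitDet Xᵀ (by rw [Matrix.det_transpose]; exact hXd)
  have h1 : (X⁻¹ * (Q * Y))ᵀ * (Xᵀ * M * X) * (X⁻¹ * (Q * Y)) =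
      Yᵀ * (Qᵀ * (X⁻¹ᵀ * (Xᵀ * (M * (X * (X⁻¹ * (Q * Y))))))) := by
    simp only [Matrix.transpose_mul, Matrix.mul_assoc]
  rw [h1, Matrix.transpose_nonsing_inv, Matrix.inv_mul_cancel_left_of_invertible,
    Matrix.mul_inv_cancel_left_of_invertible]
  have h2 : Qᵀ * (M * (Q * Y)) = M * Y := by
    rw [← Matrix.mul_assoc, ← Matrix.mul_assoc, hQ]
  rw [h2, Matrix.mul_assoc]

private lemma orth_of_congr (M X Y R : Matrix (Fin n) (Fin n) k)
    (hYd : IsUnit Y.det) (hR : Yᵀ * M * Y = Rᵀ * (Xᵀ * M * X) * R) :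
    (X * R * Y⁻¹)ᵀ * M * (X * R * Y⁻¹) = M := by
  haveI := Matrix.invertibleOfIsUnitDet Y hYd
  haveI := Matrix.invertibleOfIsUnitDet Yᵀ (by rw [Matrix.det_transpose]; exact hYd)
  have h1 : (X * R * Y⁻¹)ᵀ * M * (X * R * Y⁻¹) =
      Y⁻¹ᵀ * (Rᵀ * (Xᵀ * M * X) * R * Y⁻¹) := by
    simp only [Matrix.transpose_mul, Matrix.mul_assoc]
  rw [h1, ← hR, Matrix.transpose_nonsing_inv]
  have h2 : Yᵀ * M * Y * Y⁻¹ = Yᵀ * M := by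
    rw [Matrix.mul_assoc (Yᵀ * M), Matrix.mul_nonsing_inv Y hYd, Matrix.mul_one]
  rw [h2, ← Matrix.mul_assoc, Matrix.nonsing_inv_mul Yᵀ
    (by rw [Matrix.det_transpose]; exact hYd), Matrix.one_mul]

end Helpers2


open Matrix

/-- Isomorphy conditions for Type 2 involutions: `A` is conjugate over `O(n,k,β)` to
`B` or `-B` iff `YᵀMY` is congruent to `XᵀMX` via a block matrix
`[[R₁, R₂],[αR₂, R₁]]` or `[[R₁, R₂],[-αR₂, -R₁]]`. -/
theorem type2_isomorphy {k L : Type*} [Field k] [Field L] [Algebra k L]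
    (hchar : (2 : k) ≠ 0) {n : ℕ} (hn : 2 < n)
    (M : Matrix (Fin n) (Fin n) k) (hMdiag : M.IsDiag) (hM : IsUnit M)
    (m : ℕ) (hm : n = m + m)
    (α : k) (hα : α ≠ 0) (s : L) (hs : s ^ 2 = algebraMap k L α)
    (hind : LinearIndependent k ![(1 : L), s])
    (X Y : Matrix (Fin n) (Fin n) k) (hX : IsUnit X) (hY : IsUnit Y)
    (A B : Matrix (Fin n) (Fin n) L)
    (hAdef : A = (-(s * (algebraMap k L α)⁻¹)) •
      (X * (Matrix.reindex (finSumFinEquiv.trans (finCongr hm.symm))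
          (finSumFinEquiv.trans (finCongr hm.symm))
          (Matrix.fromBlocks 0 1 (α • (1 : Matrix (Fin m) (Fin m) k)) 0)) *
        X⁻¹).map (algebraMap k L))
    (hBdef : B = (-(s * (algebraMap k L α)⁻¹)) •
      (Y * (Matrix.reindex (finSumFinEquiv.trans (finCongr hm.symm))
          (finSumFinEquiv.trans (finCongr hm.symm))
          (Matrix.fromBlocks 0 1 (α • (1 : Matrix (Fin m) (Fin m) k)) 0)) *
        Y⁻¹).map (algebraMap k L))
    (hAorth : Aᵀ * M.map (algebraMap k L) * A = M.map (algebraMap k L))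
    (hBorth : Bᵀ * M.map (algebraMap k L) * B = M.map (algebraMap k L))
    (X₁ X₂ Y₁ Y₂ : Matrix (Fin m) (Fin m) k)
    (hX₁ : X₁.IsDiag) (hX₂ : X₂.IsDiag) (hY₁ : Y₁.IsDiag) (hY₂ : Y₂.IsDiag)
    (hXform : Xᵀ * M * X = Matrix.reindex (finSumFinEquiv.trans (finCongr hm.symm))
      (finSumFinEquiv.trans (finCongr hm.symm)) (Matrix.fromBlocks X₁ X₂ X₂ (α⁻¹ • X₁)))
    (hYform : Yᵀ * M * Y = Matrix.reindex (finSumFinEquiv.trans (finCongr hm.symm))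
      (finSumFinEquiv.trans (finCongr hm.symm)) (Matrix.fromBlocks Y₁ Y₂ Y₂ (α⁻¹ • Y₁))) :
    (∃ Q : Matrix (Fin n) (Fin n) k, Qᵀ * M * Q = M ∧
      ((Q.map (algebraMap k L))⁻¹ * A * Q.map (algebraMap k L) = B ∨
       (Q.map (algebraMap k L))⁻¹ * A * Q.map (algebraMap k L) = -B)) ↔
    (∃ R₁ R₂ : Matrix (Fin m) (Fin m) k,
      (IsUnit (Matrix.reindex (finSumFinEquiv.trans (finCongr hm.symm))
          (finSumFinEquiv.trans (finCongr hm.symm)) (Matrix.fromBlocks R₁ R₂ (α • R₂) R₁)) ∧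
        Yᵀ * M * Y =
          (Matrix.reindex (finSumFinEquiv.trans (finCongr hm.symm))
            (finSumFinEquiv.trans (finCongr hm.symm)) (Matrix.fromBlocks R₁ R₂ (α • R₂) R₁))ᵀ *
          (Xᵀ * M * X) *
          (Matrix.reindex (finSumFinEquiv.trans (finCongr hm.symm))
            (finSumFinEquiv.trans (finCongr hm.symm)) (Matrix.fromBlocks R₁ R₂ (α • R₂) R₁))) ∨
      (IsUnit (Matrix.reindex (finSumFinEquiv.trans (finCongr hm.symm))
          (finSumFinEquiv.trans (finCongr hm.symm))
          (Matrix.fromBlocks R₁ R₂ (-(α • R₂)) (-R₁))) ∧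
        Yᵀ * M * Y =
          (Matrix.reindex (finSumFinEquiv.trans (finCongr hm.symm))
            (finSumFinEquiv.trans (finCongr hm.symm))
            (Matrix.fromBlocks R₁ R₂ (-(α • R₂)) (-R₁)))ᵀ *
          (Xᵀ * M * X) *
          (Matrix.reindex (finSumFinEquiv.trans (finCongr hm.symm))
            (finSumFinEquiv.trans (finCongr hm.symm))
            (Matrix.fromBlocks R₁ R₂ (-(α • R₂)) (-R₁))))) := by
  
  have hs0 : s ≠ 0 := by
    have h1 := hind.ne_zero 1
    simpa using h1
  have finj : Function.Injective (algebraMap k L) := (algebraMap k L).injective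
  have hαL : (algebraMap k L) α ≠ 0 := (map_ne_zero_iff _ finj).mpr hα
  set e := finSumFinEquiv.trans (finCongr hm.symm) with he
  set N := Matrix.reindex e e
    (Matrix.fromBlocks 0 1 (α • (1 : Matrix (Fin m) (Fin m) k)) 0) with hNdef
  set c : L := -(s * (algebraMap k L α)⁻¹) with hcdef
  have hc : c ≠ 0 := neg_ne_zero.mpr (mul_ne_zero hs0 (inv_ne_zero hαL))
  have hXd : IsUnit X.det := (Matrix.isUnit_iff_isUnit_det X).mp hX
  have hYd : IsUnit Y.det := (Matrix.isUnit_iff_isUnit_det Y).mp hY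
  have hMd : M.det ≠ 0 := ((Matrix.isUnit_iff_isUnit_det M).mp hM).ne_zero
  haveI := Matrix.invertibleOfIsUnitDet X hXd
  haveI := Matrix.invertibleOfIsUnitDet Y hYd
  have maps : ∀ P P' : Matrix (Fin n) (Fin n) k,
      c • P.map (algebraMap k L) = c • P'.map (algebraMap k L) ↔ P = P' := by
    intro P P'
    constructor
    · intro h
      exact Matrix.map_injective finj
        (smul_right_injective (Matrix (Fin n) (Fin n) L) hc h)
    · intro h; rw [h]
  have key : ∀ Q S : Matrix (Fin n) (Fin n) k, IsUnit Q.det →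
      ((Q.map (algebraMap k L))⁻¹ * A * Q.map (algebraMap k L) =
        c • S.map (algebraMap k L) ↔ (X * N * X⁻¹) * Q = Q * S) := by
    intro Q S hQd
    have hQL : IsUnit (Q.map (algebraMap k L)).det := by
      rw [show Q.map ⇑(algebraMap k L) = (algebraMap k L).mapMatrix Q from rfl,
        ← RingHom.map_det]
      exact hQd.map _
    haveI := Matrix.invertibleOfIsUnitDet _ hQL
    rw [Matrix.mul_assoc, Matrix.inv_mul_eq_iff_eq_mul_of_invertible, hAdef,
      Matrix.smul_mul, Matrix.mul_smul, ← Matrix.map_mul, ← Matrix.map_mul]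
    exact maps _ _
  have hnegB : -B = c • ((-(Y * N * Y⁻¹)).map (algebraMap k L)) := by
    have hmn : ((-(Y * N * Y⁻¹)).map (algebraMap k L)) =
        -((Y * N * Y⁻¹).map (algebraMap k L)) := by
      ext i j
      simp only [Matrix.map_apply, Matrix.neg_apply, map_neg]
    rw [hBdef, hmn, smul_neg]
  constructor
  · rintro ⟨Q, hQorth, hconj⟩
    have hQd : IsUnit Q.det := by
      have h := congrArg Matrix.det hQorth
      rw [Matrix.det_mul, Matrix.det_mul, Matrix.det_transpose] at h
      refine isUnit_iff_ne_zero.mpr fun h0 => hMd ?_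
      rw [h0] at h; simpa using h.symm
    haveI := Matrix.invertibleOfIsUnitDet Q hQd
    haveI : Invertible (X⁻¹) := by
      rw [← Matrix.invOf_eq_nonsing_inv]; infer_instance
    rcases hconj with hconj | hconj
    · have hk : (X * N * X⁻¹) * Q = Q * (Y * N * Y⁻¹) :=
        (key Q _ hQd).mp (hconj.trans hBdef)
      have hcomm : N * (X⁻¹ * (Q * Y)) = (X⁻¹ * (Q * Y)) * N := by
        have h3 := congrArg (fun P => X⁻¹ * (P * Y)) hk
        simp only [Matrix.mul_assoc] at h3 ⊢
        rw [Matrix.inv_mul_cancel_left_of_invertible] at h3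
        rw [Matrix.nonsing_inv_mul Y hYd, Matrix.mul_one] at h3
        exact h3
      obtain ⟨R₁, R₂, hZeq⟩ := (comm_blocks e hα _).mp hcomm
      refine ⟨R₁, R₂, Or.inl ⟨?_, ?_⟩⟩
      · rw [← hZeq]
        exact (isUnit_of_invertible X⁻¹).mul ((isUnit_of_invertible Q).mul
          (isUnit_of_invertible Y))
      · rw [← hZeq]
        exact congr_of_orth M X Y Q hXd hQorth
    · have hk : (X * N * X⁻¹) * Q = Q * (-(Y * N * Y⁻¹)) :=
        (key Q _ hQd).mp (hconj.trans hnegB)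
      have hcomm : N * (X⁻¹ * (Q * Y)) = (X⁻¹ * (Q * Y)) * (-N) := by
        have h3 := congrArg (fun P => X⁻¹ * (P * Y)) hk
        simp only [Matrix.mul_assoc, Matrix.mul_neg, Matrix.neg_mul] at h3 ⊢
        rw [Matrix.inv_mul_cancel_left_of_invertible] at h3
        rw [Matrix.nonsing_inv_mul Y hYd, Matrix.mul_one] at h3
        exact h3
      obtain ⟨R₁, R₂, hZeq⟩ := (anticomm_blocks e hα _).mp hcomm
      refine ⟨R₁, R₂, Or.inr ⟨?_, ?_⟩⟩
      · rw [← hZeq]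
        exact (isUnit_of_invertible X⁻¹).mul ((isUnit_of_invertible Q).mul
          (isUnit_of_invertible Y))
      · rw [← hZeq]
        exact congr_of_orth M X Y Q hXd hQorth
  · rintro ⟨R₁, R₂, ⟨hRu, hRc⟩ | ⟨hRu, hRc⟩⟩
    · set R := Matrix.reindex e e (Matrix.fromBlocks R₁ R₂ (α • R₂) R₁) with hRdef
      have hRd : IsUnit R.det := (Matrix.isUnit_iff_isUnit_det R).mp hRu
      haveI := Matrix.invertibleOfIsUnitDet R hRd
      haveI : Invertible (Y⁻¹) := by
        rw [← Matrix.invOf_eq_nonsing_inv]; infer_instance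
      have hQd : IsUnit (X * R * Y⁻¹).det :=
        (Matrix.isUnit_iff_isUnit_det _).mp
          ((hX.mul (isUnit_of_invertible R)).mul (isUnit_of_invertible Y⁻¹))
      have hNR : N * R = R * N := (comm_blocks e hα R).mpr ⟨R₁, R₂, hRdef⟩
      have hcommQ : (X * N * X⁻¹) * (X * R * Y⁻¹) = (X * R * Y⁻¹) * (Y * N * Y⁻¹) := by
        have h4 := congrArg (fun P => X * (P * Y⁻¹)) hNR
        simp only [Matrix.mul_assoc] at h4 ⊢
        rw [Matrix.inv_mul_cancel_left_of_invertible, Matrix.inv_mul_cancel_left_of_invertible]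
        exact h4
      refine ⟨X * R * Y⁻¹, orth_of_congr M X Y R hYd hRc, Or.inl ?_⟩
      rw [hBdef]
      exact (key _ _ hQd).mpr hcommQ
    · set R := Matrix.reindex e e (Matrix.fromBlocks R₁ R₂ (-(α • R₂)) (-R₁)) with hRdef
      have hRd : IsUnit R.det := (Matrix.isUnit_iff_isUnit_det R).mp hRu
      haveI := Matrix.invertibleOfIsUnitDet R hRd
      haveI : Invertible (Y⁻¹) := by
        rw [← Matrix.invOf_eq_nonsing_inv]; infer_instance
      have hQd : IsUnit (X * R * Y⁻¹).det :=
        (Matrix.isUnit_iff_isUnit_det _).mp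
          ((hX.mul (isUnit_of_invertible R)).mul (isUnit_of_invertible Y⁻¹))
      have hNR : N * R = R * (-N) := (anticomm_blocks e hα R).mpr ⟨R₁, R₂, hRdef⟩
      have hcommQ : (X * N * X⁻¹) * (X * R * Y⁻¹) = (X * R * Y⁻¹) * (-(Y * N * Y⁻¹)) := by
        have h4 := congrArg (fun P => X * (P * Y⁻¹)) hNR
        simp only [Matrix.mul_assoc, Matrix.mul_neg, Matrix.neg_mul] at h4 ⊢
        rw [Matrix.inv_mul_cancel_left_of_invertible, Matrix.inv_mul_cancel_left_of_invertible]
        exact h4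
      refine ⟨X * R * Y⁻¹, orth_of_congr M X Y R hYd hRc, Or.inr ?_⟩
      exact ((key _ _ hQd).mpr hcommQ).trans hnegB.symm
end

section
/- Assume there exists i ∈ k with i² = −1. Let A ∈ O(n,k,β) satisfy A² = −I_n. Then n is even and there exists X ∈ GL(n,k) such that A = X·diag(−i·I_{n/2}, i·I_{n/2})·X⁻¹ and Xᵀ·M·X has the block form [[0, X₁],[X₁, 0]] where X₁ is an invertible diagonal (n/2)×(n/2) matrix over k. -/
/-!
Because `A² = -1` and `2 ≠ 0`, the space splits as the direct sum of the eigenspaces of `A` for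
`-i` and `i`. Since `A` preserves `β` and `(±i)² = -1 ≠ 1`, both eigenspaces are totally isotropic,
so nondegeneracy makes `β` a perfect pairing between them. Hence they have a common dimension `m`,
and a basis of the `-i`-eigenspace followed by its `β`-dual basis in the `i`-eigenspace
diagonalizes `A` and has Gram matrix `[[0, 1], [1, 0]]`, i.e. `X₁ = 1`.
-/

open Matrix Module

namespace Module.End

variable {K V : Type*} [Field K] [AddCommGroup V] [Module K V]

theorem isCompl_eigenspace_of_apply_apply {f : End K V} {a b : K} (hab : a ≠ b)
    (hf : ∀ v, f (f v) - (a + b) • f v + (a * b) • v = 0) :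
    IsCompl (f.eigenspace a) (f.eigenspace b) := by
  have hab' : a - b ≠ 0 := sub_ne_zero.mpr hab
  constructor
  · rw [Submodule.disjoint_def]
    intro v ha hb
    rw [mem_eigenspace_iff] at ha hb
    have : (a - b) • v = 0 := by rw [sub_smul, ← ha, ← hb, sub_self]
    exact (smul_eq_zero.mp this).resolve_left hab'
  · rw [codisjoint_iff, eq_top_iff]
    intro v _
    have hva : f v - b • v ∈ f.eigenspace a := by
      rw [mem_eigenspace_iff, map_sub, map_smul]
      linear_combination (norm := module) hf v
    have hvb : f v - a • v ∈ f.eigenspace b := by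
      rw [mem_eigenspace_iff, map_sub, map_smul]
      linear_combination (norm := module) hf v
    refine Submodule.mem_sup.mpr ⟨_, Submodule.smul_mem _ (a - b)⁻¹ hva,
      _, Submodule.smul_mem _ (-(a - b)⁻¹) hvb, ?_⟩
    match_scalars <;> field_simp <;> ring

end Module.End

namespace LinearMap.BilinForm

variable {K V : Type*} [Field K] [AddCommGroup V] [Module K V] {B : LinearMap.BilinForm K V}

theorem apply_eq_zero_of_mem_eigenspace {f : End K V} (hf : B.comp f f = B) {μ : K}
    (hμ : μ * μ ≠ 1) {x y : V} (hx : x ∈ f.eigenspace μ) (hy : y ∈ f.eigenspace μ) :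
    B x y = 0 := by
  rw [End.mem_eigenspace_iff] at hx hy
  have h : B x y = (μ * μ) * B x y := calc
    B x y = B (f x) (f y) := by rw [← comp_apply, hf]
    _ = (μ * μ) * B x y := by simp only [hx, hy, map_smul, smul_apply, smul_eq_mul]; ring
  have : (μ * μ - 1) * B x y = 0 := by linear_combination -h
  exact (mul_eq_zero.mp this).resolve_left (sub_ne_zero.mpr hμ)

variable {U W : Submodule K V}

theorem injective_compl₁₂_of_isCompl (hB : B.SeparatingLeft) (hUW : IsCompl U W)
    (hW : ∀ w ∈ W, ∀ w' ∈ W, B w w' = 0) :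
    Function.Injective (B.compl₁₂ W.subtype U.subtype) := by
  refine (injective_iff_map_eq_zero _).mpr fun w hw => Subtype.ext (hB w fun v => ?_)
  obtain ⟨u, hu, w', hw', rfl⟩ :=
    Submodule.mem_sup.mp (hUW.sup_eq_top ▸ Submodule.mem_top (x := v))
  rw [map_add, hW w w.2 w' hw', add_zero]
  exact LinearMap.congr_fun hw ⟨u, hu⟩

theorem exists_basis_toMatrix_eq_fromBlocks [FiniteDimensional K V] (hB : B.SeparatingLeft)
    (hsymm : B.IsSymm) (hUW : IsCompl U W) (hU : ∀ u ∈ U, ∀ u' ∈ U, B u u' = 0)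
    (hW : ∀ w ∈ W, ∀ w' ∈ W, B w w' = 0) :
    ∃ b : Basis (Fin (finrank K U) ⊕ Fin (finrank K U)) K V,
      (∀ j, b (.inl j) ∈ U) ∧ (∀ j, b (.inr j) ∈ W) ∧ B.toMatrix b = fromBlocks 0 1 1 0 := by
  have hWU := injective_compl₁₂_of_isCompl hB hUW hW
  have hUW' := injective_compl₁₂_of_isCompl hB hUW.symm hU
  have hdim : finrank K W = finrank K (Dual K U) := by
    rw [Subspace.dual_finrank_eq]
    exact le_antisymm (by simpa using LinearMap.finrank_le_finrank_of_injective hWU)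
      (by simpa using LinearMap.finrank_le_finrank_of_injective hUW')
  let bU := finBasis K U
  let Φ := (B.compl₁₂ W.subtype U.subtype).linearEquivOfInjective hWU hdim
  let bW := bU.dualBasis.map Φ.symm
  have hbW : ∀ j l, B (bW j) (bU l) = if l = j then 1 else 0 := fun j l => by
    rw [← bU.dualBasis_apply_self, ← Φ.apply_symm_apply (bU.dualBasis j)]
    rfl
  refine ⟨(bU.prod bW).map (Submodule.prodEquivOfIsCompl U W hUW), by simp, by simp, ?_⟩
  ext (s | s) (t | t)
  · simp [hU]
  · simp [hsymm.eq (bU s), hbW, one_apply]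
  · simp [hbW, one_apply, eq_comm]
  · simp [hW]

end LinearMap.BilinForm

namespace Module.Basis

theorem isUnit_toMatrix {K V ι : Type*} [Field K] [AddCommGroup V] [Module K V] [Fintype ι]
    [DecidableEq ι] (b c : Basis ι K V) : IsUnit (b.toMatrix c) :=
  letI := b.invertibleToMatrix c
  isUnit_of_invertible _

end Module.Basis

namespace Matrix

variable {K ι : Type*} [Field K] [Fintype ι] [DecidableEq ι]

theorem eq_toMatrix_mul_diagonal_mul_inv {A : Matrix ι ι K} (c : Basis ι K (ι → K)) {d : ι → K}
    (h : ∀ j, A *ᵥ c j = d j • c j) :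
    A = (Pi.basisFun K ι).toMatrix c * diagonal d * ((Pi.basisFun K ι).toMatrix c)⁻¹ := by
  have hdiag : LinearMap.toMatrix c c (toLin' A) = diagonal d := by
    ext s t
    rcases eq_or_ne s t with rfl | hst <;> simp [LinearMap.toMatrix_apply, *]
  rw [inv_eq_right_inv (Basis.toMatrix_mul_toMatrix_flip _ _), ← hdiag,
    basis_toMatrix_mul_linearMap_toMatrix_mul_basis_toMatrix, LinearMap.toMatrix_eq_toMatrix',
    LinearMap.toMatrix'_toLin']

theorem transpose_toMatrix_mul_mul_toMatrix {ι' : Type*} [Fintype ι'] [DecidableEq ι']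
    (M : Matrix ι ι K) (c : Basis ι' K (ι → K)) :
    ((Pi.basisFun K ι).toMatrix c)ᵀ * M * (Pi.basisFun K ι).toMatrix c =
      (toBilin' M).toMatrix c := by
  rw [← LinearMap.BilinForm.toMatrix_mul_basis_toMatrix (Pi.basisFun K ι),
    LinearMap.BilinForm.toMatrix_basisFun, LinearMap.BilinForm.toMatrix'_toBilin']

theorem exists_hyperbolic_eigenbasis (hchar : (2 : K) ≠ 0) {M : Matrix ι ι K} (hMsymm : M.IsSymm)
    (hM : IsUnit M) {i : K} (hi : i ^ 2 = -1) {A : Matrix ι ι K} (hAorth : Aᵀ * M * A = M)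
    (hA2 : A * A = -1) :
    ∃ (m : ℕ) (b : Basis (Fin m ⊕ Fin m) K (ι → K)), (∀ j, A *ᵥ b (.inl j) = -i • b (.inl j)) ∧
      (∀ j, A *ᵥ b (.inr j) = i • b (.inr j)) ∧ (toBilin' M).toMatrix b = fromBlocks 0 1 1 0 := by
  have hB : (toBilin' M).SeparatingLeft :=
    (LinearMap.BilinForm.nondegenerate_toBilin'_iff_det_ne_zero.mpr
      ((isUnit_iff_isUnit_det M).mp hM).ne_zero).1
  have hf : (toBilin' M).comp (toLin' A) (toLin' A) = toBilin' M := by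
    rw [toBilin'_comp, hAorth]
  have hsq : ∀ v, toLin' A (toLin' A v) - (-i + i) • toLin' A v + (-i * i) • v = 0 := fun v => by
    simp only [toLin'_apply, mulVec_mulVec, hA2, neg_mulVec, one_mulVec]
    linear_combination (norm := module) (-hi) • v
  have hμ : ∀ μ : K, μ ^ 2 = -1 → μ * μ ≠ 1 := fun μ hμ h => hchar (by linear_combination hμ - h)
  obtain ⟨b, hbU, hbW, hGram⟩ := LinearMap.BilinForm.exists_basis_toMatrix_eq_fromBlocks hB
    (isSymm_toBilin'_iff_isSymm.mpr hMsymm)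
    (End.isCompl_eigenspace_of_apply_apply
      (fun h => hchar (by linear_combination i * h + 2 * hi)) hsq)
    (fun _ hx _ hy => LinearMap.BilinForm.apply_eq_zero_of_mem_eigenspace hf
      (hμ (-i) (by linear_combination hi)) hx hy)
    (fun _ hx _ hy => LinearMap.BilinForm.apply_eq_zero_of_mem_eigenspace hf (hμ i hi) hx hy)
  exact ⟨_, b, fun j => End.mem_eigenspace_iff.mp (hbU j),
    fun j => End.mem_eigenspace_iff.mp (hbW j), hGram⟩

end Matrix

theorem type3_structure_i_in_k_general {k : Type*} [Field k]
    (hchar : (2 : k) ≠ 0) {n : ℕ}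
    (M : Matrix (Fin n) (Fin n) k) (hMdiag : M.IsDiag) (hM : IsUnit M)
    (i : k) (hi : i ^ 2 = -1)
    (A : Matrix (Fin n) (Fin n) k) (hAorth : Aᵀ * M * A = M) (hA2 : A * A = -1) :
    ∃ (m : ℕ) (hm : n = m + m) (X : Matrix (Fin n) (Fin n) k), IsUnit X ∧
      A = X * (Matrix.reindex (finSumFinEquiv.trans (finCongr hm.symm))
          (finSumFinEquiv.trans (finCongr hm.symm))
          (Matrix.fromBlocks ((-i) • (1 : Matrix (Fin m) (Fin m) k)) 0 0
            (i • (1 : Matrix (Fin m) (Fin m) k)))) * X⁻¹ ∧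
      ∃ X₁ : Matrix (Fin m) (Fin m) k, IsUnit X₁ ∧ X₁.IsDiag ∧
        Xᵀ * M * X = Matrix.reindex (finSumFinEquiv.trans (finCongr hm.symm))
          (finSumFinEquiv.trans (finCongr hm.symm)) (Matrix.fromBlocks 0 X₁ X₁ 0) := by
  obtain ⟨m, b, hb₁, hb₂, hGram⟩ :=
    exists_hyperbolic_eigenbasis hchar hMdiag.isSymm hM hi hAorth hA2
  have hm : n = m + m := by simpa using finrank_eq_card_basis b
  set e := finSumFinEquiv.trans (finCongr hm.symm)
  refine ⟨m, hm, (Pi.basisFun k (Fin n)).toMatrix (b.reindex e), Basis.isUnit_toMatrix _ _, ?_,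
    1, isUnit_one, isDiag_one, ?_⟩
  · rw [smul_one_eq_diagonal, smul_one_eq_diagonal, fromBlocks_diagonal, reindex_apply,
      submatrix_diagonal_equiv]
    refine eq_toMatrix_mul_diagonal_mul_inv _ fun j => ?_
    rw [Basis.reindex_apply, Function.comp_apply]
    rcases e.symm j with s | s
    exacts [hb₁ s, hb₂ s]
  · rw [transpose_toMatrix_mul_mul_toMatrix, ← hGram]
    ext s t
    simp [e]

/-- Structure of Type 3 involutions when `i = √-1 ∈ k`: if `A ∈ O(n,k,β)` with `A² = -I`,
then `n` is even, `A = X · diag(-i·I, i·I) · X⁻¹` with `XᵀMX = [[0, X₁],[X₁, 0]]`,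
`X₁` invertible diagonal. -/
theorem type3_structure_i_in_k {k : Type*} [Field k]
    (hchar : (2 : k) ≠ 0) {n : ℕ} (hn : 2 < n)
    (M : Matrix (Fin n) (Fin n) k) (hMdiag : M.IsDiag) (hM : IsUnit M)
    (i : k) (hi : i ^ 2 = -1)
    (A : Matrix (Fin n) (Fin n) k) (hAorth : Aᵀ * M * A = M) (hA2 : A * A = -1) :
    ∃ (m : ℕ) (hm : n = m + m) (X : Matrix (Fin n) (Fin n) k), IsUnit X ∧
      A = X * (Matrix.reindex (finSumFinEquiv.trans (finCongr hm.symm))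
          (finSumFinEquiv.trans (finCongr hm.symm))
          (Matrix.fromBlocks ((-i) • (1 : Matrix (Fin m) (Fin m) k)) 0 0
            (i • (1 : Matrix (Fin m) (Fin m) k)))) * X⁻¹ ∧
      ∃ X₁ : Matrix (Fin m) (Fin m) k, IsUnit X₁ ∧ X₁.IsDiag ∧
        Xᵀ * M * X = Matrix.reindex (finSumFinEquiv.trans (finCongr hm.symm))
          (finSumFinEquiv.trans (finCongr hm.symm)) (Matrix.fromBlocks 0 X₁ X₁ 0) :=
  type3_structure_i_in_k_general hchar M hMdiag hM i hi A hAorth hA2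
end

section
/- Assume there is no element i ∈ k with i² = −1. Let A ∈ O(n,k,β) satisfy A² = −I_n. Then n is even and there exists U ∈ GL(n,k) such that A = U·J·U⁻¹, where J is the n×n block matrix [[0, −I_{n/2}],[I_{n/2}, 0]], and Uᵀ·M·U is the block diagonal matrix [[U₁, 0],[0, U₁]] where U₁ is a diagonal (n/2)×(n/2) matrix over k. -/
/-!
Let `B` be the form with Gram matrix `M` and `φ = A`, an isometry of `B` with `φ² = -1`.
As `2 ≠ 0` and `B` is nondegenerate, some `v` has `B v v ≠ 0`; then
`B v (φ v) = B (φ v) (φ² v) = -B v (φ v)` vanishes and `B (φ v) (φ v) = B v v`, so the plane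
`⟨v, φ v⟩` is nondegenerate and `φ`-stable, hence so is its orthogonal complement. Induction
gives a `B`-orthogonal basis `v₁, …, vₘ, φ v₁, …, φ vₘ`, in which `φ` has matrix
`[[0, -I], [I, 0]]` and `B` has Gram matrix `diag(D, D)` with `D = diag (B vᵢ vᵢ)`;
`U` is the change of basis to it.
-/

open Matrix Module

namespace LinearMap.BilinForm

open Submodule

variable {k V : Type*} [Field k] [AddCommGroup V] [Module k V]
  {B : LinearMap.BilinForm k V} {φ : V →ₗ[k] V}

theorem apply_map_self_eq_zero (h2 : (2 : k) ≠ 0) (hB : B.IsSymm) (hφ : B.IsOrthogonal φ)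
    (hφ2 : ∀ x, φ (φ x) = -x) (v : V) : B v (φ v) = 0 := by
  have h : B v (φ v) = -B v (φ v) := by
    calc B v (φ v) = B (φ v) (φ (φ v)) := (hφ v (φ v)).symm
      _ = -B v (φ v) := by rw [hφ2, map_neg, hB.eq]
  have : (2 : k) * B v (φ v) = 0 := by linear_combination h
  exact (mul_eq_zero.1 this).resolve_left h2

theorem eq_zero_of_apply_span_pair_eq_zero (h2 : (2 : k) ≠ 0) (hB : B.IsSymm)
    (hφ : B.IsOrthogonal φ) (hφ2 : ∀ x, φ (φ x) = -x) {v : V} (hv : B v v ≠ 0) {a b : k}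
    (h₁ : B v (a • v + b • φ v) = 0) (h₂ : B (φ v) (a • v + b • φ v) = 0) :
    a = 0 ∧ b = 0 := by
  have hvφ := apply_map_self_eq_zero h2 hB hφ hφ2 v
  have hφv : B (φ v) v = 0 := by rw [hB.eq, hvφ]
  simp only [map_add, map_smul, smul_eq_mul, hvφ, hφv, hφ v v, mul_zero, add_zero,
    zero_add] at h₁ h₂
  exact ⟨(mul_eq_zero.1 h₁).resolve_right hv, (mul_eq_zero.1 h₂).resolve_right hv⟩

theorem nondegenerate_restrict_span_pair (h2 : (2 : k) ≠ 0) (hB : B.IsSymm)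
    (hφ : B.IsOrthogonal φ) (hφ2 : ∀ x, φ (φ x) = -x) {v : V} (hv : B v v ≠ 0) :
    (B.restrict (span k {v, φ v})).Nondegenerate := by
  refine B.nondegenerate_restrict_of_disjoint_orthogonal hB.isRefl ?_
  rw [Submodule.disjoint_def]
  rintro x hx hxo
  obtain ⟨a, b, rfl⟩ := mem_span_pair.1 hx
  obtain ⟨rfl, rfl⟩ := eq_zero_of_apply_span_pair_eq_zero h2 hB hφ hφ2 hv
    (hxo v (subset_span (by simp))) (hxo (φ v) (subset_span (by simp)))
  simp

theorem finrank_span_pair (h2 : (2 : k) ≠ 0) (hB : B.IsSymm)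
    (hφ : B.IsOrthogonal φ) (hφ2 : ∀ x, φ (φ x) = -x) {v : V} (hv : B v v ≠ 0) :
    finrank k (span k {v, φ v}) = 2 := by
  have hli : LinearIndependent k ![v, φ v] := by
    refine LinearIndependent.pair_iff.2 fun a b hab ↦ ?_
    exact eq_zero_of_apply_span_pair_eq_zero h2 hB hφ hφ2 hv (by simp [hab]) (by simp [hab])
  rw [← Matrix.range_cons_cons_empty v (φ v) ![], finrank_span_eq_card hli, Fintype.card_fin]

theorem map_mem_orthogonal (hφ : B.IsOrthogonal φ) (hφ2 : ∀ x, φ (φ x) = -x)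
    {S : Submodule k V} (hS : ∀ s ∈ S, φ s ∈ S) {x : V} (hx : x ∈ B.orthogonal S) :
    φ x ∈ B.orthogonal S := by
  intro s hs
  have : φ (-φ s) = s := by rw [map_neg, hφ2, neg_neg]
  rw [← this, hφ]
  exact hx _ (S.neg_mem (hS s hs))

theorem isOrthoᵢ_sum_elim_cons (hB : B.IsSymm) {v : V} (hvφ : B v (φ v) = 0) {m : ℕ}
    {f : Fin m → V} (hf : B.IsOrthoᵢ (Sum.elim f (φ ∘ f)))
    (hfS : ∀ j, f j ∈ B.orthogonal (span k {v, φ v}))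
    (hφfS : ∀ j, φ (f j) ∈ B.orthogonal (span k {v, φ v})) :
    B.IsOrthoᵢ (Sum.elim (Fin.cons v f : Fin (m + 1) → V) (φ ∘ Fin.cons v f)) := by
  have hv : v ∈ span k {v, φ v} := subset_span (by simp)
  have hφv : φ v ∈ span k {v, φ v} := subset_span (by simp)
  have h₁ j : B v (f j) = 0 := hfS j v hv
  have h₂ j : B (φ v) (f j) = 0 := hfS j (φ v) hφv
  have h₃ j : B v (φ (f j)) = 0 := hφfS j v hv
  have h₄ j : B (φ v) (φ (f j)) = 0 := hφfS j (φ v) hφv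
  have hφv' : B (φ v) v = 0 := by rw [hB.eq, hvφ]
  have h₁' j : B (f j) v = 0 := by rw [hB.eq, h₁]
  have h₂' j : B (f j) (φ v) = 0 := by rw [hB.eq, h₂]
  have h₃' j : B (φ (f j)) v = 0 := by rw [hB.eq, h₃]
  have h₄' j : B (φ (f j)) (φ v) = 0 := by rw [hB.eq, h₄]
  have hf' := isOrthoᵢ_def.1 hf
  rintro (i | i) (j | j) hij <;> cases i using Fin.cases <;> cases j using Fin.cases <;>
    simp_all [Function.onFun]

theorem exists_isOrthoᵢ_sum_elim [FiniteDimensional k V] (h2 : (2 : k) ≠ 0) (hB : B.IsSymm)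
    (hBnd : B.Nondegenerate) (hφ : B.IsOrthogonal φ) (hφ2 : ∀ x, φ (φ x) = -x) :
    ∃ m, finrank k V = m + m ∧ ∃ f : Fin m → V,
      B.IsOrthoᵢ (Sum.elim f (φ ∘ f)) ∧ ∀ i, B (f i) (f i) ≠ 0 := by
  induction hd : finrank k V using Nat.strong_induction_on generalizing V with
  | _ d ih =>
  rcases Nat.eq_zero_or_pos d with rfl | hdpos
  · refine ⟨0, rfl, Fin.elim0, ?_, fun i ↦ i.elim0⟩
    rintro (i | i) <;> exact i.elim0
  have : Nontrivial V := finrank_pos_iff.1 (hd ▸ hdpos)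
  have : Invertible (2 : k) := invertibleOfNonzero h2
  obtain ⟨v, hv⟩ := exists_bilinForm_self_ne_zero hBnd.ne_zero (isSymm_iff.1 hB)
  set S := span k {v, φ v}
  set W := B.orthogonal S
  have hSφ : ∀ s ∈ S, φ s ∈ S := by
    intro s hs
    obtain ⟨a, b, rfl⟩ := mem_span_pair.1 hs
    rw [map_add, map_smul, map_smul, hφ2, smul_neg, add_comm, ← neg_smul]
    exact mem_span_pair.2 ⟨-b, a, rfl⟩
  have hcompl : IsCompl S W := B.isCompl_orthogonal_of_restrict_nondegenerate hB.isRefl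
    (nondegenerate_restrict_span_pair h2 hB hφ hφ2 hv)
  have hWnd : (B.restrict W).Nondegenerate := by
    refine B.nondegenerate_restrict_of_disjoint_orthogonal hB.isRefl ?_
    rw [orthogonal_orthogonal hBnd hB.isRefl]
    exact hcompl.disjoint.symm
  have hWrank : finrank k W + 2 = d := by
    rw [← finrank_span_pair h2 hB hφ hφ2 hv, ← hd, add_comm]
    exact Submodule.finrank_add_eq_of_isCompl hcompl
  have hWφ : ∀ x ∈ W, φ x ∈ W := fun x ↦ map_mem_orthogonal hφ hφ2 hSφ
  obtain ⟨m, hm, f, hf, hfv⟩ := ih (finrank k W) (by omega) (hB.restrict W) hWnd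
    (φ := φ.restrict hWφ) (fun x y ↦ hφ x y) (fun x ↦ Subtype.ext (hφ2 x)) rfl
  refine ⟨m + 1, by omega, Fin.cons v (W.subtype ∘ f), ?_, ?_⟩
  · refine isOrthoᵢ_sum_elim_cons hB (apply_map_self_eq_zero h2 hB hφ hφ2 v) ?_
      (fun j ↦ (f j).2) (fun j ↦ hWφ _ (f j).2)
    rintro (i | i) (j | j) hij <;> exact hf hij
  · intro i
    cases i using Fin.cases
    · simpa using hv
    · simpa using hfv _

theorem exists_basis_sum_isOrthoᵢ [FiniteDimensional k V] (h2 : (2 : k) ≠ 0) (hB : B.IsSymm)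
    (hBnd : B.Nondegenerate) (hφ : B.IsOrthogonal φ) (hφ2 : ∀ x, φ (φ x) = -x) :
    ∃ (m : ℕ) (b : Basis (Fin m ⊕ Fin m) k V),
      (∀ i, b (Sum.inr i) = φ (b (Sum.inl i))) ∧ B.IsOrthoᵢ b := by
  obtain ⟨m, hm, f, hfo, hfv⟩ := exists_isOrthoᵢ_sum_elim h2 hB hBnd hφ hφ2
  have hli : LinearIndependent k (Sum.elim f (φ ∘ f)) := by
    refine linearIndependent_of_isOrthoᵢ hfo ?_
    rintro (i | i)
    · exact hfv i
    · simpa [hφ (f i) (f i)] using hfv i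
  let b := basisOfLinearIndependentOfCardEqFinrank' _ hli (by simp [hm])
  exact ⟨m, b, fun i ↦ by simp [b], by simpa [b] using hfo⟩

theorem toMatrix_eq_diagonal_of_isOrthoᵢ {ι : Type*} [Fintype ι] [DecidableEq ι]
    {b : Basis ι k V} (hbo : B.IsOrthoᵢ b) :
    BilinForm.toMatrix b B = diagonal fun i ↦ B (b i) (b i) := by
  ext i j
  rw [toMatrix_apply, diagonal_apply]
  split_ifs with h
  · rw [h]
  · exact hbo h

theorem toMatrix_sum_eq_fromBlocks {ι : Type*} [Fintype ι] [DecidableEq ι]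
    {b : Basis (ι ⊕ ι) k V} (hb : ∀ i, b (Sum.inr i) = φ (b (Sum.inl i)))
    (hφ : B.IsOrthogonal φ) (hbo : B.IsOrthoᵢ b) :
    BilinForm.toMatrix b B = fromBlocks (diagonal fun i ↦ B (b (Sum.inl i)) (b (Sum.inl i))) 0 0
      (diagonal fun i ↦ B (b (Sum.inl i)) (b (Sum.inl i))) := by
  rw [toMatrix_eq_diagonal_of_isOrthoᵢ hbo, fromBlocks_diagonal]
  congr 1
  ext (i | i)
  · rfl
  · rw [Sum.elim_inr, hb, hφ]

end LinearMap.BilinForm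

namespace Matrix

variable {R ι n : Type*} [CommRing R] [Fintype ι] [DecidableEq ι] [Fintype n] [DecidableEq n]

theorem mul_basisFun_toMatrix (A : Matrix n n R) (c : Basis ι R (n → R)) :
    A * (Pi.basisFun R n).toMatrix c =
      (Pi.basisFun R n).toMatrix c * LinearMap.toMatrix c c (toLin' A) := by
  rw [basis_toMatrix_mul_linearMap_toMatrix, mul_basis_toMatrix _ _ (Pi.basisFun R n),
    toLin_eq_toLin']

theorem transpose_basisFun_toMatrix_mul_mul (M : Matrix n n R) (c : Basis ι R (n → R)) :
    ((Pi.basisFun R n).toMatrix c)ᵀ * M * (Pi.basisFun R n).toMatrix c =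
      LinearMap.BilinForm.toMatrix c (toBilin' M) := by
  rw [← LinearMap.BilinForm.toMatrix_mul_basis_toMatrix (Pi.basisFun R n),
    LinearMap.BilinForm.toMatrix_basisFun, LinearMap.BilinForm.toMatrix'_toBilin']

theorem isOrthogonal_toBilin'_toLin' {M A : Matrix n n R} (h : Aᵀ * M * A = M) :
    (toBilin' M).IsOrthogonal (toLin' A) := fun x y ↦ by
  rw [← LinearMap.BilinForm.comp_apply, toBilin'_comp, h]

theorem toLin'_apply_toLin'_apply {A : Matrix n n R} (h : A * A = -1) (x : n → R) :
    toLin' A (toLin' A x) = -x := by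
  rw [toLin'_apply, toLin'_apply, mulVec_mulVec, h, neg_mulVec, one_mulVec]

end Matrix

namespace LinearMap

theorem toMatrix_sum_eq_fromBlocks {k V ι : Type*} [Field k] [AddCommGroup V] [Module k V]
    [Fintype ι] [DecidableEq ι] {φ : V →ₗ[k] V} {b : Basis (ι ⊕ ι) k V}
    (hb : ∀ i, b (Sum.inr i) = φ (b (Sum.inl i))) (hφ2 : ∀ x, φ (φ x) = -x) :
    toMatrix b b φ = fromBlocks 0 (-1) 1 0 := by
  have hφb j : φ (b (Sum.inr j)) = -b (Sum.inl j) := by rw [hb, hφ2]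
  ext (i | i) (j | j) <;>
    simp [toMatrix_apply, ← hb, hφb, Finsupp.single_apply, one_apply, eq_comm]

theorem toMatrix_basis_reindex {R M ι κ : Type*} [CommRing R] [AddCommGroup M] [Module R M]
    [Fintype ι] [DecidableEq ι] [Fintype κ] [DecidableEq κ] (b : Basis ι R M) (e : ι ≃ κ)
    (f : M →ₗ[R] M) :
    toMatrix (b.reindex e) (b.reindex e) f = reindex e e (toMatrix b b f) := by
  ext
  simp [toMatrix_apply]

theorem BilinForm.toMatrix_basis_reindex {R M ι κ : Type*} [CommRing R] [AddCommGroup M]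
    [Module R M] [Fintype ι] [DecidableEq ι] [Fintype κ] [DecidableEq κ] (b : Basis ι R M)
    (e : ι ≃ κ) (B : LinearMap.BilinForm R M) :
    BilinForm.toMatrix (b.reindex e) B = reindex e e (BilinForm.toMatrix b B) := by
  ext
  simp [BilinForm.toMatrix_apply]

end LinearMap

theorem type3_structure_i_not_in_k_general {k : Type*} [Field k]
    (hchar : (2 : k) ≠ 0) {n : ℕ}
    (M : Matrix (Fin n) (Fin n) k) (hMdiag : M.IsDiag) (hM : IsUnit M)
    (A : Matrix (Fin n) (Fin n) k) (hAorth : Aᵀ * M * A = M) (hA2 : A * A = -1) :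
    ∃ (m : ℕ) (hm : n = m + m) (U : Matrix (Fin n) (Fin n) k), IsUnit U ∧
      A = U * (Matrix.reindex (finSumFinEquiv.trans (finCongr hm.symm))
          (finSumFinEquiv.trans (finCongr hm.symm))
          (Matrix.fromBlocks 0 (-(1 : Matrix (Fin m) (Fin m) k))
            (1 : Matrix (Fin m) (Fin m) k) 0)) * U⁻¹ ∧
      ∃ U₁ : Matrix (Fin m) (Fin m) k, U₁.IsDiag ∧
        Uᵀ * M * U = Matrix.reindex (finSumFinEquiv.trans (finCongr hm.symm))
          (finSumFinEquiv.trans (finCongr hm.symm)) (Matrix.fromBlocks U₁ 0 0 U₁) := by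
  have hφ2 := toLin'_apply_toLin'_apply hA2
  have hφ := isOrthogonal_toBilin'_toLin' hAorth
  obtain ⟨m, b, hb, hbo⟩ := LinearMap.BilinForm.exists_basis_sum_isOrthoᵢ hchar
    (isSymm_toBilin'_iff_isSymm.2 hMdiag.isSymm)
    (nondegenerate_toBilin'_iff.2 (nondegenerate_of_det_ne_zero
      ((isUnit_iff_isUnit_det M).1 hM).ne_zero)) hφ hφ2
  have hm : n = m + m := by simpa using Module.finrank_eq_card_basis b
  set e := finSumFinEquiv.trans (finCongr hm.symm)
  set U := (Pi.basisFun k (Fin n)).toMatrix (b.reindex e)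
  let := (Pi.basisFun k (Fin n)).invertibleToMatrix (b.reindex e)
  refine ⟨m, hm, U, isUnit_of_invertible U, ?_,
    diagonal fun i ↦ toBilin' M (b (Sum.inl i)) (b (Sum.inl i)), isDiag_diagonal _, ?_⟩
  · rw [← LinearMap.toMatrix_sum_eq_fromBlocks hb hφ2, ← LinearMap.toMatrix_basis_reindex,
      eq_comm, mul_inv_eq_iff_eq_mul_of_invertible, ← mul_basisFun_toMatrix]
  · rw [transpose_basisFun_toMatrix_mul_mul, LinearMap.BilinForm.toMatrix_basis_reindex,
      LinearMap.BilinForm.toMatrix_sum_eq_fromBlocks hb hφ hbo]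

/-- Structure of Type 3 involutions when `√-1 ∉ k`: if `A ∈ O(n,k,β)` with `A² = -I`,
then `n` is even, `A = U · [[0, -I],[I, 0]] · U⁻¹` with `UᵀMU = [[U₁, 0],[0, U₁]]`,
`U₁` diagonal. -/
theorem type3_structure_i_not_in_k {k : Type*} [Field k]
    (hchar : (2 : k) ≠ 0) {n : ℕ} (hn : 2 < n)
    (M : Matrix (Fin n) (Fin n) k) (hMdiag : M.IsDiag) (hM : IsUnit M)
    (hnoi : ¬ ∃ i : k, i ^ 2 = -1)
    (A : Matrix (Fin n) (Fin n) k) (hAorth : Aᵀ * M * A = M) (hA2 : A * A = -1) :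
    ∃ (m : ℕ) (hm : n = m + m) (U : Matrix (Fin n) (Fin n) k), IsUnit U ∧
      A = U * (Matrix.reindex (finSumFinEquiv.trans (finCongr hm.symm))
          (finSumFinEquiv.trans (finCongr hm.symm))
          (Matrix.fromBlocks 0 (-(1 : Matrix (Fin m) (Fin m) k))
            (1 : Matrix (Fin m) (Fin m) k) 0)) * U⁻¹ ∧
      ∃ U₁ : Matrix (Fin m) (Fin m) k, U₁.IsDiag ∧
        Uᵀ * M * U = Matrix.reindex (finSumFinEquiv.trans (finCongr hm.symm))
          (finSumFinEquiv.trans (finCongr hm.symm)) (Matrix.fromBlocks U₁ 0 0 U₁) :=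
  type3_structure_i_not_in_k_general hchar M hMdiag hM A hAorth hA2
end

section
/- Let A, B ∈ O(n,k,β) satisfy A² = −I_n and B² = −I_n (so Inn_A and Inn_B are Type 3 k-involutions of SO(n,k,β)). Then there exists Q ∈ O(n,k,β) with Q⁻¹·A·Q = B. In particular, SO(n,k,β) has at most one isomorphy class of Type 3 k-involutions over O(n,k,β). -/
/-!
An isometry `J` with `J² = -1` satisfies `β x (J x) = 0`. Pick an anisotropic `v`: then `A v` and
`B v` are anisotropic of the same length and both orthogonal to `v`, so at most two reflections
fixing `v` carry `B v` to `A v`, and after conjugating `A` by them we may assume `A v = B v`.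
Then `A` and `B` agree on the plane `P = span {v, B v}`, which is nondegenerate and stable under
both, hence both preserve `Pᗮ`; by induction on the dimension some isometry of `Pᗮ` intertwines
them there, and extending it by the identity on `P` gives the required isometry.
-/

open Matrix

open LinearMap (BilinForm)
open Submodule (span)

namespace LinearMap.BilinForm

section CommRing

variable {K V : Type*} [CommRing K] [AddCommGroup V] [Module K V] {β : BilinForm K V}

lemma isOrthogonal_ofIsCompl_orthogonal (hβ : β.IsRefl) {P : Submodule K V}
    (h : IsCompl P (β.orthogonal P)) {Q : β.orthogonal P →ₗ[K] β.orthogonal P}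
    (hQ : (β.restrict (β.orthogonal P)).IsOrthogonal Q) :
    β.IsOrthogonal (LinearMap.ofIsCompl h P.subtype ((β.orthogonal P).subtype ∘ₗ Q)) := by
  intro x y
  obtain ⟨p, w, rfl, -⟩ := Submodule.existsUnique_add_of_isCompl h x
  obtain ⟨p', w', rfl, -⟩ := Submodule.existsUnique_add_of_isCompl h y
  have hpw : β p w' = 0 := w'.2 p p.2
  have hpQw : β p (Q w') = 0 := (Q w').2 p p.2
  have hwp : β w p' = 0 := hβ _ _ (w.2 p' p'.2)
  have hQwp : β (Q w) p' = 0 := hβ _ _ ((Q w).2 p' p'.2)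
  simp only [map_add, LinearMap.add_apply, LinearMap.ofIsCompl_apply_left,
    LinearMap.ofIsCompl_apply_right, Submodule.subtype_apply, LinearMap.comp_apply]
  rw [hpw, hpQw, hwp, hQwp]
  simp only [add_zero, zero_add, add_right_inj]
  exact hQ w w'

lemma ofIsCompl_comp_eq_comp {P W : Submodule K V} (h : IsCompl P W) {A B : V →ₗ[K] V}
    (hAW : ∀ x ∈ W, A x ∈ W) (hBW : ∀ x ∈ W, B x ∈ W) (hBP : ∀ x ∈ P, B x ∈ P)
    (hAB : ∀ x ∈ P, A x = B x) {Q : W →ₗ[K] W} (hQ : Q ∘ₗ B.restrict hBW = A.restrict hAW ∘ₗ Q) :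
    LinearMap.ofIsCompl h P.subtype (W.subtype ∘ₗ Q) ∘ₗ B =
      A ∘ₗ LinearMap.ofIsCompl h P.subtype (W.subtype ∘ₗ Q) := by
  ext x
  obtain ⟨p, w, rfl, -⟩ := Submodule.existsUnique_add_of_isCompl h x
  set Q' := LinearMap.ofIsCompl h P.subtype (W.subtype ∘ₗ Q)
  have hBp : Q' (B p) = B p := LinearMap.ofIsCompl_apply_left h (⟨B p, hBP p p.2⟩ : P)
  have hBw : Q' (B w) = A (Q w) :=
    (LinearMap.ofIsCompl_apply_right h (B.restrict hBW w)).trans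
      (congrArg Subtype.val (LinearMap.congr_fun hQ w))
  simp [Q', hBp, hBw, hAB p p.2]

structure IsOrthogonalComplexStructure (β : BilinForm K V) (J : V →ₗ[K] V) : Prop where
  isOrthogonal : β.IsOrthogonal J
  apply_apply : ∀ x, J (J x) = -x

namespace IsOrthogonalComplexStructure

variable {J A B : V →ₗ[K] V}

lemma conj (hJ : IsOrthogonalComplexStructure β J) {R : V ≃ₗ[K] V} (hR : β.IsOrthogonal R) :
    IsOrthogonalComplexStructure β ((R.symm : V →ₗ[K] V) ∘ₗ J ∘ₗ (R : V →ₗ[K] V)) where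
  isOrthogonal x y := by
    simp only [LinearMap.comp_apply, LinearEquiv.coe_coe]
    rw [← hR, LinearEquiv.apply_symm_apply, LinearEquiv.apply_symm_apply, hJ.isOrthogonal, hR]
  apply_apply x := by simp [hJ.apply_apply]

lemma restrict (hJ : IsOrthogonalComplexStructure β J) {W : Submodule K V}
    (hW : ∀ x ∈ W, J x ∈ W) : IsOrthogonalComplexStructure (β.restrict W) (J.restrict hW) where
  isOrthogonal x y := hJ.isOrthogonal x y
  apply_apply x := Subtype.ext (hJ.apply_apply x)

lemma apply_mem_orthogonal (hJ : IsOrthogonalComplexStructure β J) {P : Submodule K V}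
    (hP : ∀ x ∈ P, J x ∈ P) : ∀ x ∈ β.orthogonal P, J x ∈ β.orthogonal P := by
  intro x hx p hp
  calc β p (J x) = β (J (-J p)) (J x) := by rw [map_neg, hJ.apply_apply, neg_neg]
    _ = 0 := by rw [hJ.isOrthogonal]; exact hx _ (P.neg_mem (hP p hp))

lemma apply_mem_span_pair (hJ : IsOrthogonalComplexStructure β J) (v : V) :
    ∀ x ∈ span K {v, J v}, J x ∈ span K {v, J v} := by
  intro x hx
  obtain ⟨a, b, rfl⟩ := Submodule.mem_span_pair.1 hx
  exact Submodule.mem_span_pair.2 ⟨-b, a, by simp [hJ.apply_apply]; module⟩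

lemma eqOn_span_pair (hA : IsOrthogonalComplexStructure β A)
    (hB : IsOrthogonalComplexStructure β B) {v : V} (hv : A v = B v) :
    ∀ x ∈ span K {v, B v}, A x = B x := by
  intro x hx
  obtain ⟨a, b, rfl⟩ := Submodule.mem_span_pair.1 hx
  simp only [map_add, map_smul, hB.apply_apply]
  rw [← hv, hA.apply_apply]

end IsOrthogonalComplexStructure

end CommRing

section Field

variable {K V : Type*} [Field K] [AddCommGroup V] [Module K V] {β : BilinForm K V} {z : V}

lemma two_div_smul_flip_apply_self (hz : β z z ≠ 0) : ((2 / β z z) • β.flip z) z = 2 := by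
  simp [hz]

noncomputable def orthoReflection (hz : β z z ≠ 0) : V ≃ₗ[K] V :=
  Module.reflection (two_div_smul_flip_apply_self hz)

lemma orthoReflection_apply (hz : β z z ≠ 0) (x : V) :
    orthoReflection hz x = x - (2 / β z z * β x z) • z := by
  simp [orthoReflection, Module.reflection_apply]

lemma isOrthogonal_orthoReflection (hs : β.IsSymm) (hz : β z z ≠ 0) :
    β.IsOrthogonal (orthoReflection hz) := by
  intro x y
  simp only [orthoReflection_apply, map_sub, map_smul, LinearMap.sub_apply, LinearMap.smul_apply,
    smul_eq_mul, hs.eq z y]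
  field_simp
  ring

lemma orthoReflection_apply_of_apply_eq_zero (hz : β z z ≠ 0) {x : V} (hx : β x z = 0) :
    orthoReflection hz x = x := by
  simp [orthoReflection_apply, hx]

lemma orthoReflection_apply_of_apply_self_eq (hz : β z z ≠ 0) {x : V} (hx : β z z = 2 * β x z) :
    orthoReflection hz x = x - z := by
  have hx₀ : 2 * β x z ≠ 0 := hx ▸ hz
  have hcoeff : 2 / β z z * β x z = 1 := by
    rw [hx, div_mul_eq_mul_div, div_self hx₀]
  rw [orthoReflection_apply, hcoeff, one_smul]

lemma orthoReflection_apply_self (hz : β z z ≠ 0) : orthoReflection hz z = -z :=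
  Module.reflection_apply_self _

/-- Reflect in `u - w` if it is anisotropic; otherwise `u + w` is, and reflecting in it and then
in `w` does the job. -/
lemma exists_isOrthogonal_apply_eq (h2 : (2 : K) ≠ 0) (hs : β.IsSymm) {u w v : V}
    (huw : β u u = β w w) (hw : β w w ≠ 0) (hvu : β v u = 0) (hvw : β v w = 0) :
    ∃ R : V ≃ₗ[K] V, β.IsOrthogonal R ∧ R u = w ∧ R v = v := by
  have hsub : β (u - w) (u - w) = 2 * β u (u - w) := by
    simp only [map_sub, LinearMap.sub_apply, hs.eq w u, huw]; ring
  have hadd : β (u + w) (u + w) = 2 * β u (u + w) := by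
    simp only [map_add, LinearMap.add_apply, hs.eq w u, huw]; ring
  have hsum : β (u - w) (u - w) + β (u + w) (u + w) = 2 * 2 * β w w := by
    simp only [map_add, map_sub, LinearMap.add_apply, LinearMap.sub_apply, huw]; ring
  by_cases hz : β (u - w) (u - w) = 0
  · have hz' : β (u + w) (u + w) ≠ 0 := by
      rw [hz, zero_add] at hsum
      rw [hsum]
      exact mul_ne_zero (mul_ne_zero h2 h2) hw
    refine ⟨(orthoReflection hz').trans (orthoReflection hw), fun x y => ?_, ?_, ?_⟩
    · simp only [LinearEquiv.trans_apply, isOrthogonal_orthoReflection hs hw _ _,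
        isOrthogonal_orthoReflection hs hz' x y]
    · rw [LinearEquiv.trans_apply, orthoReflection_apply_of_apply_self_eq hz' hadd,
        sub_add_cancel_left, map_neg, orthoReflection_apply_self, neg_neg]
    · have hvz : β v (u + w) = 0 := by simp [hvu, hvw]
      rw [LinearEquiv.trans_apply, orthoReflection_apply_of_apply_eq_zero hz' hvz,
        orthoReflection_apply_of_apply_eq_zero hw hvw]
  · refine ⟨orthoReflection hz, isOrthogonal_orthoReflection hs hz, ?_, ?_⟩
    · rw [orthoReflection_apply_of_apply_self_eq hz hsub, sub_sub_cancel]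
    · exact orthoReflection_apply_of_apply_eq_zero hz (by simp [hvu, hvw])

lemma disjoint_span_pair_orthogonal {v w : V} (hv : β v v ≠ 0) (hw : β w w ≠ 0)
    (hvw : β v w = 0) (hwv : β w v = 0) :
    Disjoint (span K {v, w}) (β.orthogonal (span K {v, w})) := by
  rw [Submodule.disjoint_def]
  rintro x hx hx'
  obtain ⟨a, b, rfl⟩ := Submodule.mem_span_pair.1 hx
  have hav := hx' v (Submodule.subset_span (by simp))
  have hbw := hx' w (Submodule.subset_span (by simp))
  simp only [map_add, map_smul, smul_eq_mul, hvw, hwv, mul_zero, add_zero, zero_add] at hav hbw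
  simp [(mul_eq_zero.1 hav).resolve_right hv, (mul_eq_zero.1 hbw).resolve_right hw]

namespace IsOrthogonalComplexStructure

variable {J A B : V →ₗ[K] V}

lemma apply_self_apply_eq_zero (h2 : (2 : K) ≠ 0) (hs : β.IsSymm)
    (hJ : IsOrthogonalComplexStructure β J) (x : V) : β x (J x) = 0 := by
  have h : β x (J x) = -β x (J x) := by
    calc β x (J x) = β (J x) (J (J x)) := (hJ.isOrthogonal x (J x)).symm
      _ = -β x (J x) := by rw [hJ.apply_apply, map_neg, hs.eq]
  exact (mul_eq_zero.1 (by linear_combination h : (2 : K) * β x (J x) = 0)).resolve_left h2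

lemma exists_isOrthogonal_conj_apply_eq (h2 : (2 : K) ≠ 0) (hs : β.IsSymm)
    (hA : IsOrthogonalComplexStructure β A) (hB : IsOrthogonalComplexStructure β B) {v : V}
    (hv : β v v ≠ 0) :
    ∃ R : V ≃ₗ[K] V, β.IsOrthogonal R ∧
      ((R.symm : V →ₗ[K] V) ∘ₗ A ∘ₗ (R : V →ₗ[K] V)) v = B v := by
  obtain ⟨R, hR, hRB, hRv⟩ := exists_isOrthogonal_apply_eq h2 hs
    (hB.isOrthogonal v v |>.trans (hA.isOrthogonal v v).symm) (by rwa [hA.isOrthogonal])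
    (hB.apply_self_apply_eq_zero h2 hs v) (hA.apply_self_apply_eq_zero h2 hs v)
  exact ⟨R, hR, by simp [hRv, ← hRB]⟩

theorem exists_isOrthogonal_comp_eq_comp [FiniteDimensional K V] (h2 : (2 : K) ≠ 0)
    (hs : β.IsSymm) (hnd : β.Nondegenerate) (hA : IsOrthogonalComplexStructure β A)
    (hB : IsOrthogonalComplexStructure β B) :
    ∃ Q : V →ₗ[K] V, β.IsOrthogonal Q ∧ Q ∘ₗ B = A ∘ₗ Q := by
  induction hd : Module.finrank K V using Nat.strong_induction_on generalizing V with
  | _ d ih =>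
  rcases subsingleton_or_nontrivial V with hV | hV
  · exact ⟨LinearMap.id, fun _ _ => rfl, Subsingleton.elim _ _⟩
  have : Invertible (2 : K) := invertibleOfNonzero h2
  obtain ⟨v, hv⟩ := exists_bilinForm_self_ne_zero hnd.ne_zero (isSymm_iff.1 hs)
  obtain ⟨R, hR, hA'v⟩ := exists_isOrthogonal_conj_apply_eq h2 hs hA hB hv
  set A' := (R.symm : V →ₗ[K] V) ∘ₗ A ∘ₗ (R : V →ₗ[K] V)
  have hA' := hA.conj hR
  suffices ∃ Q : V →ₗ[K] V, β.IsOrthogonal Q ∧ Q ∘ₗ B = A' ∘ₗ Q by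
    obtain ⟨Q, hQ, hQBA⟩ := this
    refine ⟨(R : V →ₗ[K] V) ∘ₗ Q, fun x y => (hR _ _).trans (hQ x y), ?_⟩
    rw [LinearMap.comp_assoc, hQBA]
    ext x
    simp [A']
  set P := span K {v, B v}
  have hBv : β v (B v) = 0 := hB.apply_self_apply_eq_zero h2 hs v
  have hcompl : IsCompl P (β.orthogonal P) :=
    (isCompl_orthogonal_iff_disjoint hs.isRefl).2 <| disjoint_span_pair_orthogonal hv
      (by rwa [hB.isOrthogonal]) hBv (hs.isRefl _ _ hBv)
  have hWnd : (β.restrict (β.orthogonal P)).Nondegenerate :=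
    β.nondegenerate_restrict_of_disjoint_orthogonal hs.isRefl <| by
      rw [orthogonal_orthogonal hnd hs.isRefl]; exact hcompl.disjoint.symm
  have hBP := hB.apply_mem_span_pair v
  have hA'B := hA'.eqOn_span_pair hB hA'v
  have hA'W := hA'.apply_mem_orthogonal fun x hx => hA'B x hx ▸ hBP x hx
  have hBW := hB.apply_mem_orthogonal hBP
  have hWlt : Module.finrank K (β.orthogonal P) < d := hd ▸ Submodule.finrank_lt fun hW =>
    hv <| (Submodule.eq_top_iff'.1 hW v) v (Submodule.subset_span (by simp))
  obtain ⟨Q, hQ, hQBA⟩ := ih _ hWlt (hs.restrict _) hWnd (hA'.restrict hA'W) (hB.restrict hBW) rfl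
  exact ⟨_, isOrthogonal_ofIsCompl_orthogonal hs.isRefl hcompl hQ,
    ofIsCompl_comp_eq_comp hcompl hA'W hBW hBP hA'B hQBA⟩

end IsOrthogonalComplexStructure

end Field

end LinearMap.BilinForm

namespace Matrix

variable {K ι : Type*} [CommRing K] [Fintype ι] [DecidableEq ι]

lemma isOrthogonal_toBilin'_toLin'_iff {M A : Matrix ι ι K} :
    M.toBilin'.IsOrthogonal (toLin' A) ↔ Aᵀ * M * A = M := by
  rw [← toBilin'.injective.eq_iff, ← toBilin'_comp, LinearMap.ext_iff₂]
  rfl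

lemma isOrthogonalComplexStructure_toBilin'_toLin' {M A : Matrix ι ι K}
    (hA : Aᵀ * M * A = M) (hA2 : A * A = -1) :
    M.toBilin'.IsOrthogonalComplexStructure (toLin' A) where
  isOrthogonal := isOrthogonal_toBilin'_toLin'_iff.2 hA
  apply_apply x := by simp [hA2, neg_mulVec]

lemma isUnit_det_of_transpose_mul_mul_eq {M Q : Matrix ι ι K} (hM : IsUnit M.det)
    (hQ : Qᵀ * M * Q = M) : IsUnit Q.det := by
  rw [← hQ, det_mul, det_mul, det_transpose] at hM
  exact isUnit_of_mul_isUnit_right hM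

end Matrix

theorem type3_isomorphy_general {k : Type*} [Field k]
    (hchar : (2 : k) ≠ 0) {n : ℕ}
    (M : Matrix (Fin n) (Fin n) k) (hMdiag : M.IsDiag) (hM : IsUnit M)
    (A B : Matrix (Fin n) (Fin n) k)
    (hAorth : Aᵀ * M * A = M) (hBorth : Bᵀ * M * B = M)
    (hA2 : A * A = -1) (hB2 : B * B = -1) :
    ∃ Q : Matrix (Fin n) (Fin n) k, Qᵀ * M * Q = M ∧ Q⁻¹ * A * Q = B := by
  have hdet : IsUnit M.det := (Matrix.isUnit_iff_isUnit_det M).1 hM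
  have hs : M.toBilin'.IsSymm := isSymm_toBilin'_iff_isSymm.2 hMdiag.isSymm
  have hnd : M.toBilin'.Nondegenerate := (nondegenerate_of_det_ne_zero hdet.ne_zero).toBilin'
  obtain ⟨Q, hQ, hQBA⟩ := (isOrthogonalComplexStructure_toBilin'_toLin' hAorth hA2)
    |>.exists_isOrthogonal_comp_eq_comp hchar hs hnd
      (isOrthogonalComplexStructure_toBilin'_toLin' hBorth hB2)
  set Qm := LinearMap.toMatrix' Q
  have hQm : Qmᵀ * M * Qm = M := isOrthogonal_toBilin'_toLin'_iff.1 (by rwa [toLin'_toMatrix'])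
  have hQmBA : Qm * B = A * Qm :=
    toLin'.injective (by rw [toLin'_mul, toLin'_mul, toLin'_toMatrix', hQBA])
  refine ⟨Qm, hQm, ?_⟩
  rw [Matrix.mul_assoc, ← hQmBA,
    nonsing_inv_mul_cancel_left _ _ (isUnit_det_of_transpose_mul_mul_eq hdet hQm)]

/-- Any two Type 3 involutions of `SO(n,k,β)` are isomorphic over `O(n,k,β)`: if
`A, B ∈ O(n,k,β)` with `A² = B² = -I`, then `A` and `B` are conjugate by an element of
`O(n,k,β)`. -/
theorem type3_isomorphy {k : Type*} [Field k]
    (hchar : (2 : k) ≠ 0) {n : ℕ} (hn : 2 < n)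
    (M : Matrix (Fin n) (Fin n) k) (hMdiag : M.IsDiag) (hM : IsUnit M)
    (A B : Matrix (Fin n) (Fin n) k)
    (hAorth : Aᵀ * M * A = M) (hBorth : Bᵀ * M * B = M)
    (hA2 : A * A = -1) (hB2 : B * B = -1) :
    ∃ Q : Matrix (Fin n) (Fin n) k, Qᵀ * M * Q = M ∧ Q⁻¹ * A * Q = B :=
  type3_isomorphy_general hchar M hMdiag hM A B hAorth hBorth hA2 hB2
end

section
/- Let L be a field extension of k, let α ∈ k be nonzero, and let s ∈ L satisfy s² = ι(α), with 1 and s linearly independent over k. Let A₀, B₀ ∈ M_n(k), set A = s·ι(A₀) and B = s·ι(B₀), and assume Aᵀ·M̄·A = M̄, Bᵀ·M̄·B = M̄, A² = −I_n, and B² = −I_n (so Inn_A and Inn_B are Type 4 k-involutions of SO(n,k,β)). Then there exists Q ∈ O(n,k,β) with ι(Q)⁻¹·A·ι(Q) = B. In particular, SO(n,k,β) has at most one isomorphy class of Type 4 k-involutions over O(n,k,β) for each square class of α. -/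
/-!
Over `k` the hypotheses say that `A₀` and `B₀` are skew-adjoint for `β` and square to
`d = -α⁻¹` (because `s² = α`). For two such operators `f`, `g` on a nondegenerate symmetric space,
take an anisotropic `v`: the vectors `f v` and `g v` are orthogonal to `v` and have the same
nonzero length `-d β(v, v)`, so by Witt's lemma some isometry `ψ` fixes `v` and sends `f v` to
`g v`. Then `ψ f ψ⁻¹` agrees with `g` on the nondegenerate plane `⟨v, g v⟩`, and one continues in
its orthogonal complement. The isometry `φ` obtained, with `φ B₀ = A₀ φ`, is the matrix `Q`.
-/

open Matrix

namespace LinearMap.BilinForm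

variable {K V : Type*} [Field K] [AddCommGroup V] [Module K V] {B : LinearMap.BilinForm K V}

noncomputable def reflection (B : LinearMap.BilinForm K V) {w : V} (hw : B w w ≠ 0) : V ≃ₗ[K] V :=
  Module.reflection (x := w) (f := (2 / B w w) • B w) (by simp [div_mul_cancel₀ _ hw])

lemma reflection_apply {w : V} (hw : B w w ≠ 0) (x : V) :
    B.reflection hw x = x - (2 / B w w * B w x) • w :=
  Module.reflection_apply (y := x) _

lemma reflection_apply_self {w : V} (hw : B w w ≠ 0) : B.reflection hw w = -w :=
  Module.reflection_apply_self _

lemma reflection_apply_of_apply_eq_zero {w : V} (hw : B w w ≠ 0) {x : V} (hx : B w x = 0) :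
    B.reflection hw x = x := by
  simp [reflection_apply, hx]

lemma apply_reflection_reflection (hB : B.IsSymm) {w : V} (hw : B w w ≠ 0) (x y : V) :
    B (B.reflection hw x) (B.reflection hw y) = B x y := by
  simp only [reflection_apply, map_sub, map_smul, LinearMap.sub_apply, LinearMap.smul_apply,
    smul_eq_mul, hB.eq x w]
  field_simp
  ring

lemma reflection_apply_eq_sub {w x : V} (hw : B w w ≠ 0) (hx : B w w = 2 * B w x) :
    B.reflection hw x = x - w := by
  have hw' : 2 * B w x ≠ 0 := hx ▸ hw
  have h1 : 2 / B w w * B w x = 1 := by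
    rw [hx]
    field_simp [left_ne_zero_of_mul hw', right_ne_zero_of_mul hw']
  rw [reflection_apply, h1, one_smul]

theorem exists_isometry_apply_eq (h2 : (2 : K) ≠ 0) (hB : B.IsSymm) {u u' : V}
    (huu' : B u u = B u' u') (hu : B u u ≠ 0) :
    ∃ ψ : V ≃ₗ[K] V, (∀ x y, B (ψ x) (ψ y) = B x y) ∧ ψ u = u' ∧
      ∀ x, B u x = 0 → B u' x = 0 → ψ x = x := by
  have hsymm := hB.eq u u'
  -- Reflect in `u - u'`; if that is isotropic, `u + u'` is not (their squares add up to
  -- `4 B u u`), and reflecting in `u + u'` and then in `u'` works.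
  by_cases h : B (u - u') (u - u') = 0
  · have h' : B (u + u') (u + u') ≠ 0 := by
      have : B (u + u') (u + u') + B (u - u') (u - u') = 4 * B u u := by
        simp only [map_add, map_sub, LinearMap.add_apply, LinearMap.sub_apply]
        linear_combination (-2 : K) * huu'
      rw [h, add_zero] at this
      rw [this]
      exact mul_ne_zero (by rw [show (4 : K) = 2 * 2 by norm_num]; exact mul_ne_zero h2 h2) hu
    have hu' : B u' u' ≠ 0 := huu' ▸ hu
    refine ⟨(B.reflection h').trans (B.reflection hu'), fun x y => ?_, ?_, fun x hux hu'x => ?_⟩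
    · simp only [LinearEquiv.trans_apply, apply_reflection_reflection hB]
    · rw [LinearEquiv.trans_apply, reflection_apply_eq_sub h', sub_add_cancel_left, map_neg,
        reflection_apply_self, neg_neg]
      simp only [map_add, LinearMap.add_apply]
      linear_combination -huu' + hsymm
    · rw [LinearEquiv.trans_apply, reflection_apply_of_apply_eq_zero h' (by simp [hux, hu'x]),
        reflection_apply_of_apply_eq_zero hu' hu'x]
  · refine ⟨B.reflection h, apply_reflection_reflection hB h, ?_, fun x hux hu'x => ?_⟩
    · rw [reflection_apply_eq_sub h, sub_sub_cancel]
      simp only [map_sub, LinearMap.sub_apply]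
      linear_combination -huu' - hsymm
    · exact reflection_apply_of_apply_eq_zero h (by simp [hux, hu'x])

theorem disjoint_orthogonal_sup_span_singleton (hB : B.IsSymm) {S : Submodule K V}
    (hS : Disjoint S (B.orthogonal S)) {v : V} (hv : v ∈ B.orthogonal S) (hvv : B v v ≠ 0) :
    Disjoint (S ⊔ K ∙ v) (B.orthogonal (S ⊔ K ∙ v)) := by
  rw [Submodule.disjoint_def] at hS ⊢
  rintro _ hx hx'
  obtain ⟨s, hs, _, hz, rfl⟩ := Submodule.mem_sup.1 hx
  obtain ⟨a, rfl⟩ := Submodule.mem_span_singleton.1 hz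
  have hvs : B v s = 0 := by rw [hB.eq]; exact hv s hs
  have ha : a = 0 := by
    have := hx' v (Submodule.mem_sup_right (Submodule.mem_span_singleton_self v))
    simp only [map_add, map_smul, hvs, smul_eq_mul, zero_add, mul_eq_zero] at this
    exact this.resolve_right hvv
  subst ha
  rw [zero_smul, add_zero] at hx' ⊢
  exact hS s hs fun n hn => hx' n (Submodule.mem_sup_left hn)

theorem exists_mem_orthogonal_apply_self_ne_zero [FiniteDimensional K V] (h2 : (2 : K) ≠ 0)
    (hB : B.IsSymm) (hnd : B.Nondegenerate) {S : Submodule K V}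
    (hS : Disjoint S (B.orthogonal S)) (hT : B.orthogonal S ≠ ⊥) :
    ∃ v ∈ B.orthogonal S, B v v ≠ 0 := by
  by_contra! h
  have : B.restrict (B.orthogonal S) = 0 := by
    by_contra hne
    have := invertibleOfNonzero h2
    obtain ⟨x, hx⟩ := exists_bilinForm_self_ne_zero hne (isSymm_iff.1 (hB.restrict _))
    exact hx (h x x.2)
  have hle : B.orthogonal S ≤ B.orthogonal (B.orthogonal S) := fun t ht n hn =>
    LinearMap.congr_fun₂ this ⟨n, hn⟩ ⟨t, ht⟩
  rw [orthogonal_orthogonal hnd hB.isRefl S] at hle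
  exact hT (hS.eq_bot_of_ge hle)

end LinearMap.BilinForm

namespace LinearMap.IsSkewAdjoint

variable {K V : Type*} [Field K] [AddCommGroup V] [Module K V] {B : LinearMap.BilinForm K V}
  {f : Module.End K V}

theorem apply_self_eq_zero (h2 : (2 : K) ≠ 0) (hB : B.IsSymm) (hf : B.IsSkewAdjoint f) (x : V) :
    B (f x) x = 0 := by
  have := hf x x
  rw [Pi.neg_apply, map_neg, hB.eq x] at this
  exact (mul_eq_zero.1 (by linear_combination this : 2 * B (f x) x = 0)).resolve_left h2

theorem apply_apply_eq {d : K} (hf : B.IsSkewAdjoint f) (hf2 : f * f = d • 1) (x y : V) :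
    B (f x) (f y) = -d * B x y := by
  rw [hf, Pi.neg_apply, ← Module.End.mul_apply, hf2]
  simp

theorem le_comap_orthogonal (hf : B.IsSkewAdjoint f) {S : Submodule K V}
    (hS : S ≤ S.comap f) : B.orthogonal S ≤ (B.orthogonal S).comap f := by
  intro v hv s hs
  have := hf s v
  rw [Pi.neg_apply, map_neg] at this
  rw [← neg_eq_zero, ← this]
  exact hv _ (hS hs)

theorem mem_orthogonal_sup_span_singleton (h2 : (2 : K) ≠ 0) (hB : B.IsSymm)
    (hf : B.IsSkewAdjoint f) {S : Submodule K V} (hS : S ≤ S.comap f) {v : V}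
    (hv : v ∈ B.orthogonal S) : f v ∈ B.orthogonal (S ⊔ K ∙ v) := by
  intro n hn
  obtain ⟨s, hs, z, hz, rfl⟩ := Submodule.mem_sup.1 hn
  obtain ⟨a, rfl⟩ := Submodule.mem_span_singleton.1 hz
  rw [map_add, map_smul, LinearMap.add_apply, LinearMap.smul_apply, hB.eq v,
    hf.apply_self_eq_zero h2 hB v, smul_zero, add_zero]
  exact hf.le_comap_orthogonal hS hv s hs

theorem conj {ψ : V ≃ₗ[K] V} (hψ : ∀ x y, B (ψ x) (ψ y) = B x y) (hf : B.IsSkewAdjoint f) :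
    B.IsSkewAdjoint (ψ.conj f) := by
  intro x y
  calc B (ψ.conj f x) y = B (ψ (f (ψ.symm x))) (ψ (ψ.symm y)) := by simp
    _ = -B (ψ.symm x) (f (ψ.symm y)) := by rw [hψ, hf, Pi.neg_apply, map_neg]
    _ = B x ((-ψ.conj f) y) := by rw [← hψ]; simp

end LinearMap.IsSkewAdjoint

namespace LinearMap.BilinForm

variable {K V : Type*} [Field K] [AddCommGroup V] [Module K V] {B : LinearMap.BilinForm K V}

theorem exists_isometry_sup_le_eqLocus_conj (h2 : (2 : K) ≠ 0) (hB : B.IsSymm) {d : K}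
    (hd : d ≠ 0) {f g : Module.End K V} (hf : B.IsSkewAdjoint f) (hg : B.IsSkewAdjoint g)
    (hf2 : f * f = d • 1) (hg2 : g * g = d • 1) {S : Submodule K V} (hgS : S ≤ S.comap g)
    (hfgS : S ≤ LinearMap.eqLocus f g) {v : V} (hvS : v ∈ B.orthogonal S) (hvv : B v v ≠ 0) :
    ∃ ψ : V ≃ₗ[K] V, (∀ x y, B (ψ x) (ψ y) = B x y) ∧
      S ⊔ K ∙ v ⊔ K ∙ g v ≤ LinearMap.eqLocus (ψ.conj f) g := by
  obtain ⟨ψ, hψ, hψv, hψfix⟩ := exists_isometry_apply_eq h2 hB (u := f v) (u' := g v)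
    (by rw [hf.apply_apply_eq hf2, hg.apply_apply_eq hg2])
    (by rw [hf.apply_apply_eq hf2]; exact mul_ne_zero (neg_ne_zero.2 hd) hvv)
  have hvg : ∀ x ∈ S, B v (g x) = 0 := fun x hx => by rw [hB.eq]; exact hvS _ (hgS hx)
  have hψS : ∀ x ∈ S, ψ x = x := fun x hx => hψfix x
    (by rw [hf, Pi.neg_apply, map_neg, hfgS hx, hvg x hx, neg_zero])
    (by rw [hg, Pi.neg_apply, map_neg, hvg x hx, neg_zero])
  have hψv' : ψ v = v := hψfix v (hf.apply_self_eq_zero h2 hB v) (hg.apply_self_eq_zero h2 hB v)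
  refine ⟨ψ, hψ, sup_le (sup_le (fun x hx => ?_) ?_) ?_⟩
  · rw [LinearMap.mem_eqLocus, LinearEquiv.conj_apply_apply, ψ.symm_apply_eq.2 (hψS x hx).symm,
      hfgS hx, hψS _ (hgS hx)]
  · rw [Submodule.span_singleton_le_iff_mem, LinearMap.mem_eqLocus,
      LinearEquiv.conj_apply_apply, ψ.symm_apply_eq.2 hψv'.symm, hψv]
  · rw [Submodule.span_singleton_le_iff_mem, LinearMap.mem_eqLocus,
      LinearEquiv.conj_apply_apply, ψ.symm_apply_eq.2 hψv.symm, ← Module.End.mul_apply, hf2,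
      ← Module.End.mul_apply, hg2]
    simp [hψv']

variable [FiniteDimensional K V]

theorem exists_isometry_intertwining_of_eqOn (h2 : (2 : K) ≠ 0) (hB : B.IsSymm)
    (hnd : B.Nondegenerate) {d : K} (hd : d ≠ 0) {f g : Module.End K V}
    (hf : B.IsSkewAdjoint f) (hg : B.IsSkewAdjoint g) (hf2 : f * f = d • 1)
    (hg2 : g * g = d • 1) {S : Submodule K V} (hS : Disjoint S (B.orthogonal S))
    (hgS : S ≤ S.comap g) (hfgS : S ≤ LinearMap.eqLocus f g) :
    ∃ φ : V ≃ₗ[K] V, (∀ x y, B (φ x) (φ y) = B x y) ∧ ∀ x, φ (f x) = g (φ x) := by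
  induction hm : Module.finrank K (B.orthogonal S) using Nat.strong_induction_on
    generalizing f S with
  | _ m ih =>
  obtain hT | hT := eq_or_ne (B.orthogonal S) ⊥
  · have hS_top : S = ⊤ := by rw [← orthogonal_orthogonal hnd hB.isRefl S, hT, orthogonal_bot]
    exact ⟨LinearEquiv.refl K V, fun _ _ => rfl, fun x => hfgS (hS_top ▸ Submodule.mem_top)⟩
  obtain ⟨v, hvS, hvv⟩ := exists_mem_orthogonal_apply_self_ne_zero h2 hB hnd hS hT
  obtain ⟨ψ, hψ, hfgS'⟩ :=
    exists_isometry_sup_le_eqLocus_conj h2 hB hd hf hg hf2 hg2 hgS hfgS hvS hvv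
  set S' := S ⊔ K ∙ v ⊔ K ∙ g v
  have hS' : Disjoint S' (B.orthogonal S') :=
    disjoint_orthogonal_sup_span_singleton hB
      (disjoint_orthogonal_sup_span_singleton hB hS hvS hvv)
      (hg.mem_orthogonal_sup_span_singleton h2 hB hgS hvS)
      (by rw [hg.apply_apply_eq hg2]; exact mul_ne_zero (neg_ne_zero.2 hd) hvv)
  have hvS' : v ∈ S' := Submodule.mem_sup_left (Submodule.mem_sup_right
    (Submodule.mem_span_singleton_self v))
  have hgS' : S' ≤ S'.comap g := by
    refine sup_le (sup_le (fun x hx => Submodule.mem_sup_left (Submodule.mem_sup_left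
      (hgS hx))) ?_) ?_ <;> rw [Submodule.span_singleton_le_iff_mem, Submodule.mem_comap]
    · exact Submodule.mem_sup_right (Submodule.mem_span_singleton_self _)
    · rw [← Module.End.mul_apply, hg2]
      simpa using S'.smul_mem d hvS'
  have hlt : Module.finrank K (B.orthogonal S') < m := hm ▸ Submodule.finrank_lt_finrank_of_lt
    (SetLike.lt_iff_le_and_exists.2 ⟨orthogonal_le (le_sup_left.trans le_sup_left), v, hvS,
      fun h => hvv (h v hvS')⟩)
  have hf'2 : ψ.conj f * ψ.conj f = d • 1 := by
    rw [Module.End.mul_eq_comp, ← LinearEquiv.conj_comp, ← Module.End.mul_eq_comp, hf2, map_smul,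
      Module.End.one_eq_id, LinearEquiv.conj_id]
  obtain ⟨φ, hφ, hφf⟩ := ih _ hlt (hf.conj hψ) hf'2 hS' hgS' hfgS' rfl
  refine ⟨ψ.trans φ, fun x y => by simp [hφ, hψ], fun x => ?_⟩
  simpa using hφf (ψ x)

theorem exists_isometry_intertwining (h2 : (2 : K) ≠ 0) (hB : B.IsSymm)
    (hnd : B.Nondegenerate) {d : K} (hd : d ≠ 0) {f g : Module.End K V}
    (hf : B.IsSkewAdjoint f) (hg : B.IsSkewAdjoint g) (hf2 : f * f = d • 1)
    (hg2 : g * g = d • 1) :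
    ∃ φ : V ≃ₗ[K] V, (∀ x y, B (φ x) (φ y) = B x y) ∧ ∀ x, φ (f x) = g (φ x) :=
  exists_isometry_intertwining_of_eqOn h2 hB hnd hd hf hg hf2 hg2 (S := ⊥) (by simp) bot_le bot_le

end LinearMap.BilinForm

namespace Matrix

section

variable {K n : Type*} [Field K] [Fintype n] [DecidableEq n]

theorem IsSkewAdjoint.toBilin' {M A : Matrix n n K} (hA : M.IsSkewAdjoint A) :
    M.toBilin'.IsSkewAdjoint (toLin' A) := by
  have := (isAdjointPair_toLinearMap₂' M M A (-A)).2 hA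
  rwa [map_neg] at this

theorem toLin'_mul_self_eq_smul_one {A : Matrix n n K} {d : K} (hA : A * A = d • 1) :
    toLin' A * toLin' A = d • 1 := by
  rw [Module.End.mul_eq_comp, ← toLin'_mul, hA, map_smul, toLin'_one, Module.End.one_eq_id]

theorem exists_isometry_mul_eq_mul_of_isSkewAdjoint (h2 : (2 : K) ≠ 0) {M A B : Matrix n n K}
    (hM : M.IsSymm) (hMu : IsUnit M) {d : K} (hd : d ≠ 0) (hA : M.IsSkewAdjoint A)
    (hB : M.IsSkewAdjoint B) (hA2 : A * A = d • 1) (hB2 : B * B = d • 1) :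
    ∃ Q : Matrix n n K, Qᵀ * M * Q = M ∧ IsUnit Q ∧ Q * B = A * Q := by
  have hnd : M.toBilin'.Nondegenerate := nondegenerate_toBilin'_iff.2
    (nondegenerate_of_det_ne_zero ((isUnit_iff_isUnit_det M).1 hMu).ne_zero)
  obtain ⟨φ, hφ, hφB⟩ := LinearMap.BilinForm.exists_isometry_intertwining h2
    (isSymm_toBilin'_iff_isSymm.2 hM) hnd hd hB.toBilin' hA.toBilin'
    (toLin'_mul_self_eq_smul_one hB2) (toLin'_mul_self_eq_smul_one hA2)
  refine ⟨LinearMap.toMatrix' (φ : (n → K) →ₗ[K] n → K), ?_,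
    LinearMap.isUnit_toMatrix'_iff.2 ((Module.End.isUnit_iff _).2 φ.bijective), ?_⟩
  · apply toBilin'.injective
    rw [← toBilin'_comp, toLin'_toMatrix']
    exact LinearMap.ext₂ hφ
  · apply toLin'.injective
    refine LinearMap.ext fun x => ?_
    simpa [toLin'_mul] using hφB x

end

theorem map_inv_mul_smul_map_mul {k L n : Type*} [CommRing k] [CommRing L] [Fintype n]
    [DecidableEq n] (f : k →+* L) (s : L) {Q A B : Matrix n n k} (hQ : IsUnit Q)
    (h : Q * B = A * Q) :
    (Q.map f)⁻¹ * (s • A.map f) * Q.map f = s • B.map f := by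
  have hQ' : IsUnit (Q.map f).det := (isUnit_iff_isUnit_det _).1 (hQ.map f.mapMatrix)
  rw [Matrix.mul_smul, Matrix.smul_mul, mul_assoc, ← Matrix.map_mul, ← h, Matrix.map_mul]
  exact congrArg (s • ·) (nonsing_inv_mul_cancel_left _ _ hQ')

section

variable {k L n : Type*} [Field k] [CommRing L] [Algebra k L]

theorem smul_sq_map_eq_map_smul {α : k} {s : L} (hs : s ^ 2 = algebraMap k L α)
    (X : Matrix n n k) :
    s ^ 2 • X.map (algebraMap k L) = (α • X).map (algebraMap k L) := by
  ext
  simp only [smul_apply, map_apply, smul_eq_mul, hs, map_mul]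

theorem isSkewAdjoint_and_mul_self_of_smul_map [Fintype n] [DecidableEq n] [Nontrivial L]
    {α : k} (hα : α ≠ 0) {s : L} (hs : s ^ 2 = algebraMap k L α) {M C₀ : Matrix n n k}
    {C : Matrix n n L} (hC : C = s • C₀.map (algebraMap k L))
    (hCorth : Cᵀ * M.map (algebraMap k L) * C = M.map (algebraMap k L)) (hC2 : C * C = -1) :
    M.IsSkewAdjoint C₀ ∧ C₀ * C₀ = (-α⁻¹) • 1 := by
  have hinj := map_injective (algebraMap k L).injective (m := n) (n := n)
  have horth : α • (C₀ᵀ * M * C₀) = M := hinj <| by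
    rw [hC, transpose_smul, Matrix.smul_mul, Matrix.smul_mul, Matrix.mul_smul, smul_smul, ← sq,
      ← transpose_map, ← Matrix.map_mul, ← Matrix.map_mul, smul_sq_map_eq_map_smul hs] at hCorth
    exact hCorth
  have hsq : α • (C₀ * C₀) = -1 := hinj <| by
    rw [hC, Matrix.smul_mul, Matrix.mul_smul, smul_smul, ← sq, ← Matrix.map_mul,
      smul_sq_map_eq_map_smul hs] at hC2
    exact hC2.trans (by beta_reduce; rw [← RingHom.mapMatrix_apply, map_neg, map_one])
  refine ⟨?_, ?_⟩
  · have hMC : M * C₀ = -(C₀ᵀ * M) := by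
      conv_lhs => rw [← horth]
      rw [Matrix.smul_mul, mul_assoc, ← Matrix.mul_smul, hsq, Matrix.mul_neg, mul_one]
    change C₀ᵀ * M = M * -C₀
    rw [Matrix.mul_neg, hMC, neg_neg]
  · rw [← one_smul k (C₀ * C₀), ← inv_mul_cancel₀ hα, ← smul_smul, hsq, smul_neg, neg_smul]

end

end Matrix

theorem type4_isomorphy_general {k L : Type*} [Field k] [Field L] [Algebra k L]
    (hchar : (2 : k) ≠ 0) {n : ℕ}
    (M : Matrix (Fin n) (Fin n) k) (hMdiag : M.IsDiag) (hM : IsUnit M)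
    (α : k) (hα : α ≠ 0) (s : L) (hs : s ^ 2 = algebraMap k L α)
    (A₀ B₀ : Matrix (Fin n) (Fin n) k) (A B : Matrix (Fin n) (Fin n) L)
    (hAdef : A = s • A₀.map (algebraMap k L)) (hBdef : B = s • B₀.map (algebraMap k L))
    (hAorth : Aᵀ * M.map (algebraMap k L) * A = M.map (algebraMap k L))
    (hBorth : Bᵀ * M.map (algebraMap k L) * B = M.map (algebraMap k L))
    (hA2 : A * A = -1) (hB2 : B * B = -1) :
    ∃ Q : Matrix (Fin n) (Fin n) k, Qᵀ * M * Q = M ∧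
      (Q.map (algebraMap k L))⁻¹ * A * Q.map (algebraMap k L) = B := by
  obtain ⟨hA₀, hA₀2⟩ := isSkewAdjoint_and_mul_self_of_smul_map hα hs hAdef hAorth hA2
  obtain ⟨hB₀, hB₀2⟩ := isSkewAdjoint_and_mul_self_of_smul_map hα hs hBdef hBorth hB2
  obtain ⟨Q, hQM, hQ, hQAB⟩ := exists_isometry_mul_eq_mul_of_isSkewAdjoint hchar hMdiag.isSymm
    hM (neg_ne_zero.2 (inv_ne_zero hα)) hA₀ hB₀ hA₀2 hB₀2
  refine ⟨Q, hQM, ?_⟩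
  rw [hAdef, hBdef]
  exact map_inv_mul_smul_map_mul _ s hQ hQAB

/-- Any two Type 4 involutions of `SO(n,k,β)` (for the same square root `s` of `α`)
are isomorphic over `O(n,k,β)`. -/
theorem type4_isomorphy {k L : Type*} [Field k] [Field L] [Algebra k L]
    (hchar : (2 : k) ≠ 0) {n : ℕ} (hn : 2 < n)
    (M : Matrix (Fin n) (Fin n) k) (hMdiag : M.IsDiag) (hM : IsUnit M)
    (α : k) (hα : α ≠ 0) (s : L) (hs : s ^ 2 = algebraMap k L α)
    (hind : LinearIndependent k ![(1 : L), s])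
    (A₀ B₀ : Matrix (Fin n) (Fin n) k) (A B : Matrix (Fin n) (Fin n) L)
    (hAdef : A = s • A₀.map (algebraMap k L)) (hBdef : B = s • B₀.map (algebraMap k L))
    (hAorth : Aᵀ * M.map (algebraMap k L) * A = M.map (algebraMap k L))
    (hBorth : Bᵀ * M.map (algebraMap k L) * B = M.map (algebraMap k L))
    (hA2 : A * A = -1) (hB2 : B * B = -1) :
    ∃ Q : Matrix (Fin n) (Fin n) k, Qᵀ * M * Q = M ∧
      (Q.map (algebraMap k L))⁻¹ * A * Q.map (algebraMap k L) = B :=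
  type4_isomorphy_general hchar M hMdiag hM α hα s hs A₀ B₀ A B hAdef hBdef hAorth hBorth hA2 hB2
end
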